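/- arXiv:2302.07058 — 9 statements merged into one kernel-verified Lean document; each statement's English description precedes it below -/
import Mathlib

section
/- Let R be a finite index set, K_r ∈ M_d⊗M_d with blocks K_{r;hh'}, and E(x) = Tr₂(Σ_{r∈R} K_r* x K_r). Then E is D_e-preserving (i.e. E(a⊗b) is a diagonal matrix whenever a, b ∈ M_d are diagonal) if and only if for all indices m, m' and all j ≠ j' one has Σ_{r∈R} Tr(K_{r;mj}* E_{m'm'} K_{r;mj'}) = 0, equivalently Σ_{r∈R} (K_{r;mj'} K_{r;mj}*)(m',m') = 0. In that case, for all m, m': E(E_{mm}⊗E_{m'm'}) = Σ_j Tr(Σ_{r∈R} K_{r;mj}* E_{m'm'} K_{r;mj}) · E_{jj}. -/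
open Matrix BigOperators

/-- Kronecker tensor product of two `d × d` matrices, indexed by `Fin d × Fin d`. -/
noncomputable def mtens {d : ℕ} (A B : Matrix (Fin d) (Fin d) ℂ) :
    Matrix (Fin d × Fin d) (Fin d × Fin d) ℂ :=
  fun p q => A p.1 q.1 * B p.2 q.2

/-- Partial trace over the second tensor factor. -/
noncomputable def ptr2 {d : ℕ} (X : Matrix (Fin d × Fin d) (Fin d × Fin d) ℂ) :
    Matrix (Fin d) (Fin d) ℂ :=
  fun i j => ∑ k, X (i, k) (j, k)

/-- The `(h,h')` block of `K ∈ M_d ⊗ M_d`. -/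
noncomputable def blk {d : ℕ} (K : Matrix (Fin d × Fin d) (Fin d × Fin d) ℂ) (h h' : Fin d) :
    Matrix (Fin d) (Fin d) ℂ :=
  fun a b => K (h, a) (h', b)

/-- The transition expectation `E(x) = Tr₂(Σ_r K_r* x K_r)`. -/
noncomputable def Emap {d : ℕ} {R : Type*} [Fintype R]
    (K : R → Matrix (Fin d × Fin d) (Fin d × Fin d) ℂ)
    (x : Matrix (Fin d × Fin d) (Fin d × Fin d) ℂ) : Matrix (Fin d) (Fin d) ℂ :=
  ptr2 (∑ r, (K r)ᴴ * x * K r)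

/-- `E` is `D_e`-preserving: it maps (tensor products of) diagonal matrices to
diagonal matrices. -/
def DePreserving {d : ℕ} {R : Type*} [Fintype R]
    (K : R → Matrix (Fin d × Fin d) (Fin d × Fin d) ℂ) : Prop :=
  ∀ a b : Matrix (Fin d) (Fin d) ℂ, a.IsDiag → b.IsDiag → (Emap K (mtens a b)).IsDiag

/-!
A tensor product of diagonal matrices is diagonal, and `E` is linear, so `E(a ⊗ b)` is a
combination of the matrices `E(E_{mm} ⊗ E_{m'm'})`, whose `(j, j')` entry is
`Σ_r (K_{r;mj'} K_{r;mj}*)(m', m')`. Hence `E` is `D_e`-preserving exactly when these entries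
vanish for `j ≠ j'`, and then `E(E_{mm} ⊗ E_{m'm'})` is the diagonal matrix of the remaining
entries. The trace form of the condition is `Tr(A* E_{m'm'} B) = (B A*)(m', m')`.
-/

open scoped Kronecker

namespace Matrix

variable {n : Type*} [Fintype n] [DecidableEq n] {α : Type*} [CommSemiring α]

theorem trace_mul_single_self_mul (A B : Matrix n n α) (i : n) :
    trace (A * single i i 1 * B) = (B * A) i i := by
  rw [trace_mul_cycle, trace_mul_single, MulOpposite.op_one, one_smul]

end Matrix

section

variable {d : ℕ} {R : Type*} [Fintype R] (K : R → Matrix (Fin d × Fin d) (Fin d × Fin d) ℂ)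

theorem mtens_eq_kronecker (A B : Matrix (Fin d) (Fin d) ℂ) : mtens A B = A ⊗ₖ B := rfl

theorem mtens_single_single (m m' : Fin d) :
    mtens (single m m 1) (single m' m' 1) = single (m, m') (m, m') 1 := by
  rw [mtens_eq_kronecker, single_kronecker_single, mul_one]

theorem Emap_diagonal_apply (x : Fin d × Fin d → ℂ) (i j : Fin d) :
    Emap K (diagonal x) i j =
      ∑ s, x s * ∑ r, (blk (K r) s.1 j * (blk (K r) s.1 i)ᴴ) s.2 s.2 := by
  simp only [Emap, ptr2, blk, Matrix.sum_apply, mul_apply, conjTranspose_apply, diagonal_apply,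
    mul_ite, mul_zero, Finset.sum_ite_eq', Finset.mem_univ, if_true, Finset.mul_sum]
  rw [Finset.sum_comm_cycle]
  refine Finset.sum_congr rfl fun s _ => ?_
  rw [Finset.sum_comm]
  exact Finset.sum_congr rfl fun r _ => Finset.sum_congr rfl fun k _ => by ring

theorem Emap_single_apply (s : Fin d × Fin d) (i j : Fin d) :
    Emap K (single s s 1) i j = ∑ r, (blk (K r) s.1 j * (blk (K r) s.1 i)ᴴ) s.2 s.2 := by
  rw [← diagonal_single, Emap_diagonal_apply]
  simp [Pi.single_apply]

theorem dePreserving_iff : DePreserving K ↔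
    ∀ m m' j j' : Fin d, j ≠ j' → ∑ r, (blk (K r) m j' * (blk (K r) m j)ᴴ) m' m' = 0 := by
  constructor
  · intro h m m' j j' hjj'
    have hdiag := h _ _ (isDiag_diagonal (Pi.single m 1)) (isDiag_diagonal (Pi.single m' 1)) hjj'
    rwa [diagonal_single, diagonal_single, mtens_single_single, Emap_single_apply] at hdiag
  · intro h a b ha hb i j hij
    rw [← ha.diagonal_diag, ← hb.diagonal_diag, mtens_eq_kronecker, diagonal_kronecker_diagonal,
      Emap_diagonal_apply]
    exact Finset.sum_eq_zero fun s _ => by rw [h s.1 s.2 i j hij, mul_zero]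

theorem Emap_single_single_of_dePreserving (h : DePreserving K) (m m' : Fin d) :
    Emap K (mtens (single m m 1) (single m' m' 1)) =
      diagonal fun j => ∑ r, (blk (K r) m j * (blk (K r) m j)ᴴ) m' m' := by
  ext i j
  rw [mtens_single_single, Emap_single_apply, diagonal_apply]
  split_ifs with hij
  · rw [hij]
  · exact (dePreserving_iff K).mp h m m' i j hij

end

theorem stmt4_general {d : ℕ} {R : Type*} [Fintype R]
    (K : R → Matrix (Fin d × Fin d) (Fin d × Fin d) ℂ) :
    (DePreserving K ↔
      ∀ m m' j j' : Fin d, j ≠ j' →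
        (∑ r, Matrix.trace ((blk (K r) m j)ᴴ * Matrix.single m' m' 1 *
          blk (K r) m j')) = 0) ∧
    (DePreserving K ↔
      ∀ m m' j j' : Fin d, j ≠ j' →
        (∑ r, (blk (K r) m j' * (blk (K r) m j)ᴴ) m' m') = 0) ∧
    (DePreserving K →
      ∀ m m' : Fin d,
        Emap K (mtens (Matrix.single m m 1) (Matrix.single m' m' 1)) =
          ∑ j, Matrix.trace (∑ r, (blk (K r) m j)ᴴ * Matrix.single m' m' 1 *
            blk (K r) m j) • Matrix.single j j 1) := by
  simp only [trace_sum, trace_mul_single_self_mul]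
  refine ⟨dePreserving_iff K, dePreserving_iff K, fun h m m' => ?_⟩
  simp only [smul_single, smul_eq_mul, mul_one, sum_single_eq_diagonal]
  exact Emap_single_single_of_dePreserving K h m m'

/-- Characterization of `D_e`-preserving transition expectations, the
equivalent entrywise form of the condition, and the resulting diagonal formula. -/
theorem stmt4 {d : ℕ} (hd : 1 ≤ d) {R : Type*} [Fintype R]
    (K : R → Matrix (Fin d × Fin d) (Fin d × Fin d) ℂ) :
    (DePreserving K ↔
      ∀ m m' j j' : Fin d, j ≠ j' →
        (∑ r, Matrix.trace ((blk (K r) m j)ᴴ * Matrix.single m' m' 1 *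
          blk (K r) m j')) = 0) ∧
    (DePreserving K ↔
      ∀ m m' j j' : Fin d, j ≠ j' →
        (∑ r, (blk (K r) m j' * (blk (K r) m j)ᴴ) m' m') = 0) ∧
    (DePreserving K →
      ∀ m m' : Fin d,
        Emap K (mtens (Matrix.single m m 1) (Matrix.single m' m' 1)) =
          ∑ j, Matrix.trace (∑ r, (blk (K r) m j)ᴴ * Matrix.single m' m' 1 *
            blk (K r) m j) • Matrix.single j j 1) :=
  stmt4_general K
end

section
/- Let R be a finite index set, K_r ∈ M_d⊗M_d with blocks K_{r;hh'}, and suppose E(x) = Tr₂(Σ_{r∈R} K_r* x K_r) is D_e-preserving (E(a⊗b) diagonal whenever a,b ∈ M_d are diagonal). Then E(1⊗1) = 1 if and only if Σ_m Tr(Σ_{r∈R} K_{r;mj}* K_{r;mj}) = 1 for every index j; that is, if and only if the (automatically nonnegative) matrix P(j,m) := Tr(Σ_{r∈R} K_{r;mj}* K_{r;mj}) is a stochastic matrix. -/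
open Matrix BigOperators

section Aux
variable {d : ℕ} {R : Type*} [Fintype R]

lemma mtens_one_one : mtens (1 : Matrix (Fin d) (Fin d) ℂ) 1 = 1 := by
  ext p q
  rcases p with ⟨i, k⟩; rcases q with ⟨j, l⟩
  simp only [mtens, Matrix.one_apply, Prod.ext_iff]
  by_cases h1 : i = j <;> by_cases h2 : k = l <;> simp [h1, h2]

lemma trace_eq (K : R → Matrix (Fin d × Fin d) (Fin d × Fin d) ℂ) (j m : Fin d) :
    Matrix.trace (∑ r, (blk (K r) m j)ᴴ * blk (K r) m j) =
      ∑ b, ∑ r : R, ∑ a, star (K r (m, a) (j, b)) * K r (m, a) (j, b) := by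
  simp [Matrix.trace, Matrix.diag, Matrix.sum_apply, Matrix.mul_apply,
    Matrix.conjTranspose_apply, blk, Finset.sum_comm (γ := R)]

lemma sum_swap4 (f : Fin d → R → Fin d → Fin d → ℂ) :
    ∑ k, ∑ r, ∑ m, ∑ a, f k r m a = ∑ m, ∑ k, ∑ r, ∑ a, f k r m a :=
  (Finset.sum_congr rfl fun k _ => Finset.sum_comm).trans Finset.sum_comm

lemma diag_entry (K : R → Matrix (Fin d × Fin d) (Fin d × Fin d) ℂ) (j : Fin d) :
    (Emap K (mtens 1 1)) j j =
      ∑ m, Matrix.trace (∑ r, (blk (K r) m j)ᴴ * blk (K r) m j) := by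
  rw [mtens_one_one]
  simp only [trace_eq, Emap, ptr2, Matrix.mul_one, Matrix.sum_apply, Matrix.mul_apply,
    Matrix.conjTranspose_apply, Fintype.sum_prod_type]
  exact sum_swap4 (fun k r m a => star (K r (m, a) (j, k)) * K r (m, a) (j, k))

end Aux

/-- For a `D_e`-preserving transition expectation, identity preservation
`E(1⊗1) = 1` is equivalent to `Σ_m Tr(Σ_r K_{r;mj}* K_{r;mj}) = 1` for all `j`, i.e. the
(automatically nonnegative real) matrix `P(j,m) = Tr(Σ_r K_{r;mj}* K_{r;mj})` is stochastic. -/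
theorem stmt5 {d : ℕ} (hd : 1 ≤ d) {R : Type*} [Fintype R]
    (K : R → Matrix (Fin d × Fin d) (Fin d × Fin d) ℂ)
    (hpres : DePreserving K) :
    (∀ j m : Fin d, ∃ t : ℝ, 0 ≤ t ∧
        Matrix.trace (∑ r, (blk (K r) m j)ᴴ * blk (K r) m j) = (t : ℂ)) ∧
    (Emap K (mtens 1 1) = 1 ↔
      ∀ j : Fin d, (∑ m, Matrix.trace (∑ r, (blk (K r) m j)ᴴ * blk (K r) m j)) = 1) := by
  constructor
  · intro j m
    refine ⟨∑ b, ∑ r : R, ∑ a, Complex.normSq (K r (m, a) (j, b)), ?_, ?_⟩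
    · refine Finset.sum_nonneg fun b _ => Finset.sum_nonneg fun r _ =>
        Finset.sum_nonneg fun a _ => Complex.normSq_nonneg _
    · rw [trace_eq]
      push_cast
      refine Finset.sum_congr rfl fun b _ => Finset.sum_congr rfl fun r _ =>
        Finset.sum_congr rfl fun a _ => ?_
      rw [← starRingEnd_apply, mul_comm, Complex.mul_conj]
  · have hdiag : (Emap K (mtens 1 1)).IsDiag := hpres 1 1 Matrix.isDiag_one Matrix.isDiag_one
    constructor
    · intro h j
      rw [← diag_entry K j, h, Matrix.one_apply_eq]
    · intro h
      ext i j
      by_cases hij : i = j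
      · subst hij
        rw [Matrix.one_apply_eq, diag_entry K i, h i]
      · rw [hdiag hij, Matrix.one_apply_ne hij]
end

section
/- Let E(x) = Tr₂(Σ_{r∈R} K_r* x K_r) be D_e-preserving and identity-preserving, with P_{r;m,i} := Σ_{s∈R}(K_{s;mr}K_{s;mr}*)(i,i) and P_{r;m} := Σ_i P_{r;m,i}. Fix n ∈ ℕ and indices i₀,…,iₙ, and define matrices recursively by Aₙ := E(E_{iₙiₙ}⊗1) and A_m := E(E_{i_m i_m}⊗A_{m+1}) for m = n−1,…,0. Then A₀ = Σ_{r₀,…,rₙ} P_{r₀;i₀,r₁}·P_{r₁;i₁,r₂}···P_{r_{n−1};i_{n−1},rₙ}·P_{rₙ;iₙ} · E_{r₀r₀}. Consequently, for every probability vector p⁰ on {1,…,d} (entries ≥ 0 summing to 1), Tr(diag(p⁰)·A₀) = Σ_{r₀,…,rₙ} p⁰_{r₀}·P_{r₀;i₀,r₁}···P_{r_{n−1};i_{n−1},rₙ}·P_{rₙ;iₙ}; these are the joint probabilities of the restriction of the quantum Markov chain determined by (diag(p⁰), E) to the diagonal subalgebra. -/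
/-!
A direct computation of the diagonal entries shows `E(E_{mm} ⊗ diag β)(a,a) = Σ_b P_{a;m,b} β_b`;
since `E` is `D_e`-preserving this matrix is diagonal. Starting from `β = 1` and running the
recursion backwards, `A₀` is therefore diagonal, with `(a,a)` entry the total weight
`P_{r₀;i₀,r₁} ⋯ P_{rₙ;iₙ}` of all paths `r₀ = a, r₁, …, rₙ`. Pairing with `diag(p⁰)` gives the
trace formula.
-/

open Matrix BigOperators

/-- `P_{r;m,i} := Σ_{s∈R} (K_{s;mr} K_{s;mr}*)(i,i)`. -/
noncomputable def Pval {d : ℕ} {R : Type*} [Fintype R]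
    (K : R → Matrix (Fin d × Fin d) (Fin d × Fin d) ℂ) (r m i : Fin d) : ℂ :=
  ∑ s, (blk (K s) m r * (blk (K s) m r)ᴴ) i i

/-- `P_{r;m} := Σ_i P_{r;m,i}`. -/
noncomputable def Psum {d : ℕ} {R : Type*} [Fintype R]
    (K : R → Matrix (Fin d × Fin d) (Fin d × Fin d) ℂ) (r m : Fin d) : ℂ :=
  ∑ i, Pval K r m i

lemma Emap_single_tensor_diagonal_apply_self {d : ℕ} {R : Type*} [Fintype R]
    (K : R → Matrix (Fin d × Fin d) (Fin d × Fin d) ℂ) (m : Fin d) (β : Fin d → ℂ) (a : Fin d) :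
    Emap K (mtens (single m m 1) (diagonal β)) a a = ∑ b, Pval K a m b * β b := by
  simp only [Emap, ptr2, Matrix.sum_apply, mul_apply, mtens, conjTranspose_apply, single,
    diagonal_apply, Fintype.sum_prod_type, Pval, blk, of_apply, ite_mul, mul_ite, one_mul,
    zero_mul, mul_zero, ite_and, Finset.sum_ite_irrel, Finset.sum_ite_eq,
    Finset.sum_ite_eq', Finset.mem_univ, if_true, Finset.sum_const_zero, Finset.sum_mul]
  rw [Finset.sum_comm]
  conv_rhs => rw [Finset.sum_comm]
  refine Finset.sum_congr rfl fun s _ => ?_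
  rw [Finset.sum_comm]
  exact Finset.sum_congr rfl fun b _ => Finset.sum_congr rfl fun k _ => by ring

lemma Emap_single_tensor_diagonal {d : ℕ} {R : Type*} [Fintype R]
    {K : R → Matrix (Fin d × Fin d) (Fin d × Fin d) ℂ} (hK : DePreserving K)
    (m : Fin d) (β : Fin d → ℂ) :
    Emap K (mtens (single m m 1) (diagonal β)) =
      diagonal fun a => ∑ b, Pval K a m b * β b := by
  have hdiag : (Emap K (mtens (single m m 1) (diagonal β))).IsDiag :=
    hK _ _ (by rw [← diagonal_single]; exact isDiag_diagonal _) (isDiag_diagonal β)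
  ext a b
  obtain rfl | hab := eq_or_ne a b
  · rw [diagonal_apply_eq, Emap_single_tensor_diagonal_apply_self]
  · rw [hdiag hab, diagonal_apply_ne _ hab]

lemma Fin.sum_univ_fun_succ {α M : Type*} [Fintype α] [AddCommMonoid M] {n : ℕ}
    (g : (Fin (n + 1) → α) → M) :
    ∑ r, g r = ∑ a, ∑ r : Fin n → α, g (Fin.cons a r) := by
  rw [← (Fin.consEquiv fun _ => α).sum_comp, Fintype.sum_prod_type]
  rfl

section PathWeight

variable {d : ℕ} {R : Type*} [Fintype R] (K : R → Matrix (Fin d × Fin d) (Fin d × Fin d) ℂ)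

noncomputable def pathWeight (i : ℕ → Fin d) (n : ℕ) (r : Fin (n + 1) → Fin d) : ℂ :=
  (∏ m : Fin n, Pval K (r m.castSucc) (i m) (r m.succ)) * Psum K (r (Fin.last n)) (i n)

noncomputable def pathWeightFrom (i : ℕ → Fin d) (n : ℕ) (a : Fin d) : ℂ :=
  ∑ r : Fin n → Fin d, pathWeight K i n (Fin.cons a r)

lemma pathWeight_cons (i : ℕ → Fin d) (n : ℕ) (a : Fin d) (r : Fin (n + 1) → Fin d) :
    pathWeight K i (n + 1) (Fin.cons a r) =
      Pval K a (i 0) (r 0) * pathWeight K (fun m => i (m + 1)) n r := by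
  simp only [pathWeight, Fin.prod_univ_succ, Fin.castSucc_zero, Fin.cons_zero,
    ← Fin.succ_castSucc, Fin.cons_succ, ← Fin.succ_last, Fin.val_succ, Fin.val_zero]
  ring

lemma pathWeightFrom_zero (i : ℕ → Fin d) (a : Fin d) :
    pathWeightFrom K i 0 a = Psum K a (i 0) := by
  simp [pathWeightFrom, pathWeight]

lemma pathWeightFrom_succ (i : ℕ → Fin d) (n : ℕ) (a : Fin d) :
    pathWeightFrom K i (n + 1) a =
      ∑ b, Pval K a (i 0) b * pathWeightFrom K (fun m => i (m + 1)) n b := by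
  simp only [pathWeightFrom, Fin.sum_univ_fun_succ, pathWeight_cons, Fin.cons_zero, Finset.mul_sum]

end PathWeight

lemma eq_diagonal_pathWeightFrom {d : ℕ} {R : Type*} [Fintype R]
    {K : R → Matrix (Fin d × Fin d) (Fin d × Fin d) ℂ} (hK : DePreserving K) (n : ℕ) :
    ∀ (i : ℕ → Fin d) (A : ℕ → Matrix (Fin d) (Fin d) ℂ),
      A n = Emap K (mtens (single (i n) (i n) 1) 1) →
      (∀ m < n, A m = Emap K (mtens (single (i m) (i m) 1) (A (m + 1)))) →
      A 0 = diagonal (pathWeightFrom K i n) := by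
  induction n with
  | zero =>
    intro i A hAn _
    rw [hAn, ← diagonal_one, Emap_single_tensor_diagonal hK]
    simp [pathWeightFrom_zero, Psum]
  | succ n ih =>
    intro i A hAn hArec
    have hA1 : A 1 = diagonal (pathWeightFrom K (fun m => i (m + 1)) n) :=
      ih _ (fun m => A (m + 1)) hAn fun m hm => hArec (m + 1) (by omega)
    rw [hArec 0 n.succ_pos, zero_add, hA1, Emap_single_tensor_diagonal hK]
    exact congrArg diagonal (funext fun a => (pathWeightFrom_succ K i n a).symm)

theorem stmt7_general {d : ℕ} {R : Type*} [Fintype R]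
    (K : R → Matrix (Fin d × Fin d) (Fin d × Fin d) ℂ)
    (hpres : DePreserving K)
    (n : ℕ) (i : ℕ → Fin d)
    (A : ℕ → Matrix (Fin d) (Fin d) ℂ)
    (hAn : A n = Emap K (mtens (Matrix.single (i n) (i n) 1) 1))
    (hArec : ∀ m, m < n →
      A m = Emap K (mtens (Matrix.single (i m) (i m) 1) (A (m + 1))))
    (p : Fin d → ℝ) :
    A 0 = (∑ r : Fin (n + 1) → Fin d,
        ((∏ m : Fin n, Pval K (r m.castSucc) (i m) (r m.succ)) *
          Psum K (r (Fin.last n)) (i n)) •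
        Matrix.single (r 0) (r 0) 1) ∧
    Matrix.trace ((Matrix.diagonal fun k => (p k : ℂ)) * A 0) =
      ∑ r : Fin (n + 1) → Fin d,
        (p (r 0) : ℂ) * (∏ m : Fin n, Pval K (r m.castSucc) (i m) (r m.succ)) *
          Psum K (r (Fin.last n)) (i n) := by
  have hA0 := eq_diagonal_pathWeightFrom hpres n i A hAn hArec
  constructor
  · rw [hA0, ← sum_single_eq_diagonal, Fin.sum_univ_fun_succ]
    refine Finset.sum_congr rfl fun a _ => ?_
    simp only [Fin.cons_zero]
    rw [← Finset.sum_smul, smul_single, smul_eq_mul, mul_one]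
    rfl
  · rw [hA0, diagonal_mul_diagonal, trace_diagonal, Fin.sum_univ_fun_succ]
    refine Finset.sum_congr rfl fun a _ => ?_
    simp only [Fin.cons_zero, pathWeightFrom, Finset.mul_sum, pathWeight, mul_assoc]

/-- The iterated action of a `D_e`-preserving identity-preserving
transition expectation on diagonal matrix units, and the resulting joint probabilities of
the diagonal restriction of the associated quantum Markov chain. -/
theorem stmt7 {d : ℕ} (hd : 1 ≤ d) {R : Type*} [Fintype R]
    (K : R → Matrix (Fin d × Fin d) (Fin d × Fin d) ℂ)
    (hpres : DePreserving K)
    (hunit : Emap K (mtens 1 1) = 1)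
    (n : ℕ) (i : ℕ → Fin d)
    (A : ℕ → Matrix (Fin d) (Fin d) ℂ)
    (hAn : A n = Emap K (mtens (Matrix.single (i n) (i n) 1) 1))
    (hArec : ∀ m, m < n →
      A m = Emap K (mtens (Matrix.single (i m) (i m) 1) (A (m + 1))))
    (p : Fin d → ℝ) (hp_nonneg : ∀ k, 0 ≤ p k) (hp_sum : ∑ k, p k = 1) :
    A 0 = (∑ r : Fin (n + 1) → Fin d,
        ((∏ m : Fin n, Pval K (r m.castSucc) (i m) (r m.succ)) *
          Psum K (r (Fin.last n)) (i n)) •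
        Matrix.single (r 0) (r 0) 1) ∧
    Matrix.trace ((Matrix.diagonal fun k => (p k : ℂ)) * A 0) =
      ∑ r : Fin (n + 1) → Fin d,
        (p (r 0) : ℂ) * (∏ m : Fin n, Pval K (r m.castSucc) (i m) (r m.succ)) *
          Psum K (r (Fin.last n)) (i n) :=
  stmt7_general K hpres n i A hAn hArec p
end

section
/- Let R be a finite index set, K_r ∈ M_d⊗M_d with blocks K_{r;hh'}, and suppose E(x) = Tr₂(Σ_{r∈R} K_r* x K_r) is D_e-preserving and identity-preserving. Then the following are equivalent: (1) E(a⊗b) = a·E(1⊗b) for all diagonal a, b ∈ M_d (the Markov factorization property ensuring the diagonal restriction is a classical Markov chain); (2) K_{r;mh} = 0 for every r ∈ R and all m ≠ h, i.e. every K_r has the form K_r = Σ_h E_{hh}⊗K_{r;hh}. -/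
open Matrix BigOperators

lemma emap_diag_apply {d : ℕ} {R : Type*} [Fintype R]
    (K : R → Matrix (Fin d × Fin d) (Fin d × Fin d) ℂ)
    (a b : Matrix (Fin d) (Fin d) ℂ) (ha : a.IsDiag) (hb : b.IsDiag) (i j : Fin d) :
    Emap K (mtens a b) i j =
      ∑ r, ∑ m, ∑ c, ∑ k,
        star (K r (m, c) (i, k)) * (a m m * b c c) * K r (m, c) (j, k) := by
  have hzero : ∀ v u : Fin d × Fin d, v ≠ u → a v.1 u.1 * b v.2 u.2 = 0 := by
    rintro ⟨v1, v2⟩ ⟨u1, u2⟩ h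
    by_cases h1 : v1 = u1
    · have h2 : v2 ≠ u2 := by
        intro h2; exact h (by simp [Prod.ext_iff, h1, h2])
      simp [hb h2]
    · simp [ha h1]
  have key : ∀ (r : R) (ik : Fin d × Fin d) (u : Fin d × Fin d),
      (∑ v, star (K r v ik) * (a v.1 u.1 * b v.2 u.2)) =
        star (K r u ik) * (a u.1 u.1 * b u.2 u.2) := by
    intro r ik u
    rw [Finset.sum_eq_single u]
    · intro v _ hv
      rw [hzero v u hv, mul_zero]
    · intro h; exact absurd (Finset.mem_univ u) h
  simp only [Emap, ptr2, mtens, Matrix.sum_apply, Matrix.mul_apply,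
    Matrix.conjTranspose_apply, key]
  rw [Finset.sum_comm]
  refine Finset.sum_congr rfl fun r _ => ?_
  rw [Finset.sum_comm, Fintype.sum_prod_type]

/-- For a `D_e`-preserving identity-preserving transition expectation, the
Markov factorization property `E(a⊗b) = a·E(1⊗b)` on diagonal elements holds iff every `K_r`
is block-diagonal, i.e. `K_{r;mh} = 0` for `m ≠ h`. -/
theorem stmt9 {d : ℕ} (hd : 1 ≤ d) {R : Type*} [Fintype R]
    (K : R → Matrix (Fin d × Fin d) (Fin d × Fin d) ℂ)
    (hpres : DePreserving K)
    (hunit : Emap K (mtens 1 1) = 1) :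
    (∀ a b : Matrix (Fin d) (Fin d) ℂ, a.IsDiag → b.IsDiag →
        Emap K (mtens a b) = a * Emap K (mtens 1 b)) ↔
      (∀ r : R, ∀ m h : Fin d, m ≠ h → blk (K r) m h = 0) := by
  constructor
  · intro hM r0 m h hmh
    set a : Matrix (Fin d) (Fin d) ℂ := Matrix.single m m 1 with ha_def
    have ha : a.IsDiag := by
      intro i j hij
      simp only [ha_def, Matrix.single, Matrix.of_apply]
      rw [if_neg]
      rintro ⟨rfl, rfl⟩
      exact hij rfl
    have hone : (1 : Matrix (Fin d) (Fin d) ℂ).IsDiag := Matrix.isDiag_one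
    have key := hM a 1 ha hone
    rw [hunit, Matrix.mul_one] at key
    have h0 : Emap K (mtens a 1) h h = 0 := by
      rw [key]
      simp [ha_def, Matrix.single, hmh]
    rw [emap_diag_apply K a 1 ha hone h h] at h0
    have hcol : ∀ r : R,
        (∑ m', ∑ c, ∑ k, star (K r (m', c) (h, k)) *
          (a m' m' * (1 : Matrix (Fin d) (Fin d) ℂ) c c) * K r (m', c) (h, k))
        = ∑ c, ∑ k, (Complex.normSq (K r (m, c) (h, k)) : ℂ) := by
      intro r
      rw [Finset.sum_eq_single m]
      · refine Finset.sum_congr rfl fun c _ => Finset.sum_congr rfl fun k _ => ?_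
        simp [ha_def, Matrix.single, Matrix.one_apply, Complex.star_def,
          Complex.normSq_eq_conj_mul_self]
      · intro m' _ hm'
        apply Finset.sum_eq_zero; intro c _
        apply Finset.sum_eq_zero; intro k _
        simp [ha_def, Matrix.single, (Ne.symm hm' : ¬ m = m')]
      · intro hmem; exact absurd (Finset.mem_univ m) hmem
    simp only [hcol] at h0
    have hreal : ∑ r, ∑ c, ∑ k, Complex.normSq (K r (m, c) (h, k)) = 0 := by
      have : ((∑ r, ∑ c, ∑ k, Complex.normSq (K r (m, c) (h, k)) : ℝ) : ℂ) = 0 := by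
        push_cast
        exact h0
      exact_mod_cast this
    have hterm : ∀ r c k, Complex.normSq (K r (m, c) (h, k)) = 0 := by
      intro r c k
      have h1 := (Finset.sum_eq_zero_iff_of_nonneg
        (fun r _ => Finset.sum_nonneg fun c _ => Finset.sum_nonneg fun k _ =>
          Complex.normSq_nonneg _)).mp hreal r (Finset.mem_univ r)
      have h2 := (Finset.sum_eq_zero_iff_of_nonneg
        (fun c _ => Finset.sum_nonneg fun k _ => Complex.normSq_nonneg _)).mp h1 c
        (Finset.mem_univ c)
      exact (Finset.sum_eq_zero_iff_of_nonneg
        (fun k _ => Complex.normSq_nonneg _)).mp h2 k (Finset.mem_univ k)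
    funext c k
    show K r0 (m, c) (h, k) = 0
    exact Complex.normSq_eq_zero.mp (hterm r0 c k)
  · intro h2 a b ha hb
    funext i j
    rw [emap_diag_apply K a b ha hb i j, Matrix.mul_apply,
      Finset.sum_eq_single i (fun m' _ hm' => by rw [ha (Ne.symm hm'), zero_mul])
        (fun hmem => absurd (Finset.mem_univ i) hmem),
      emap_diag_apply K 1 b Matrix.isDiag_one hb i j]
    simp only [Finset.mul_sum]
    refine Finset.sum_congr rfl fun r _ => Finset.sum_congr rfl fun m _ =>
      Finset.sum_congr rfl fun c _ => Finset.sum_congr rfl fun k _ => ?_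
    rcases eq_or_ne m i with rfl | hm
    · simp [Matrix.one_apply]; ring
    · have hz : K r (m, c) (i, k) = 0 := by
        have := h2 r m i hm
        have := congrFun (congrFun this c) k
        simpa [blk] using this
      simp [hz]
end

section
/- Let K ∈ M_d⊗M_d have the form K = Σ_h E_{hh}⊗K_h with K_h ∈ M_d pairwise distinct (K_h ≠ K_{h'} whenever h ≠ h'), suppose Tr₂(K*K) = 1 (K is a conditional density amplitude), and suppose that in M_d⊗M_d⊗M_d, K on the first two factors commutes with K on the last two factors ([K⊗1, 1⊗K] = 0). Then each K_h is a diagonal matrix; more precisely there exist complex numbers κ_{hj} with Σ_j |κ_{hj}|² = 1 for every h such that K = Σ_{h,j} κ_{hj} E_{hh}⊗E_{jj}, so K is diagonalizable and (|κ_{hj}|²) is a stochastic matrix. -/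
/-!
Entrywise `K ((i,k),(j,l)) = δ_ij (K_i)_kl`, and comparing the entries `((a,b,x),(a,c,y))` of
`(K⊗1)(1⊗K)` and `(1⊗K)(K⊗1)` gives `(K_a)_bc • K_c = (K_a)_bc • K_b`. A nonzero off-diagonal
entry `(K_a)_bc` would thus force `K_b = K_c`, against distinctness, so every `K_h` is diagonal.
The normalisation of `κ_hj = (K_h)_jj` is then the diagonal entry `(h,h)` of `Tr₂(K*K) = 1`.
-/

open Matrix BigOperators

/-- `K ⊗ 1` in `M_d ⊗ M_d ⊗ M_d`: `K` acting on the first two tensor factors. -/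
noncomputable def tensL {d : ℕ} (K : Matrix (Fin d × Fin d) (Fin d × Fin d) ℂ) :
    Matrix (Fin d × Fin d × Fin d) (Fin d × Fin d × Fin d) ℂ :=
  fun p q => K (p.1, p.2.1) (q.1, q.2.1) * (if p.2.2 = q.2.2 then 1 else 0)

/-- `1 ⊗ K` in `M_d ⊗ M_d ⊗ M_d`: `K` acting on the last two tensor factors. -/
noncomputable def tensR {d : ℕ} (K : Matrix (Fin d × Fin d) (Fin d × Fin d) ℂ) :
    Matrix (Fin d × Fin d × Fin d) (Fin d × Fin d × Fin d) ℂ :=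
  fun p q => (if p.1 = q.1 then 1 else 0) * K (p.2.1, p.2.2) (q.2.1, q.2.2)

namespace BlockDiagAmplitude

variable {d : ℕ}

theorem tensL_mul_tensR_apply (K : Matrix (Fin d × Fin d) (Fin d × Fin d) ℂ)
    (a b x a' c y : Fin d) :
    (tensL K * tensR K) (a, b, x) (a', c, y) = ∑ r, K (a, b) (a', r) * K (r, x) (c, y) := by
  simp [Matrix.mul_apply, tensL, tensR, Fintype.sum_prod_type]

theorem tensR_mul_tensL_apply (K : Matrix (Fin d × Fin d) (Fin d × Fin d) ℂ)
    (a b x a' c y : Fin d) :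
    (tensR K * tensL K) (a, b, x) (a', c, y) = ∑ r, K (b, x) (r, y) * K (a, r) (a', c) := by
  simp [Matrix.mul_apply, tensL, tensR, Fintype.sum_prod_type]

theorem ptr2_conjTranspose_mul_self_apply_self (K : Matrix (Fin d × Fin d) (Fin d × Fin d) ℂ)
    (i : Fin d) : ptr2 (Kᴴ * K) i i = ∑ k, ∑ p, (‖K p (i, k)‖ ^ 2 : ℂ) := by
  simp [ptr2, Matrix.mul_apply, Complex.conj_mul']

noncomputable def blockSum (Kb : Fin d → Matrix (Fin d) (Fin d) ℂ) :
    Matrix (Fin d × Fin d) (Fin d × Fin d) ℂ :=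
  ∑ h, mtens (single h h 1) (Kb h)

variable {Kb : Fin d → Matrix (Fin d) (Fin d) ℂ}

theorem blockSum_apply (i k j l : Fin d) :
    blockSum Kb (i, k) (j, l) = if i = j then Kb i k l else 0 := by
  rw [blockSum, Matrix.sum_apply, Finset.sum_eq_single i]
  · by_cases hij : i = j <;> simp [mtens, single, hij]
  · intro h _ hhi
    simp [mtens, single, hhi]
  · simp

theorem mul_blocks_eq_of_commute (hshift : tensL (blockSum Kb) * tensR (blockSum Kb) =
      tensR (blockSum Kb) * tensL (blockSum Kb)) (a b c x y : Fin d) :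
    Kb a b c * Kb c x y = Kb a b c * Kb b x y := by
  have h := congrFun (congrFun hshift (a, b, x)) (a, c, y)
  simp only [tensL_mul_tensR_apply, tensR_mul_tensL_apply, blockSum_apply] at h
  simpa [mul_comm] using h

theorem isDiag_of_commute (hdist : Function.Injective Kb)
    (hshift : tensL (blockSum Kb) * tensR (blockSum Kb) =
      tensR (blockSum Kb) * tensL (blockSum Kb)) (h : Fin d) : (Kb h).IsDiag := by
  intro b c hbc
  by_contra hne
  refine hbc (hdist ?_).symm
  ext x y
  exact mul_left_cancel₀ hne (mul_blocks_eq_of_commute hshift h b c x y)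

theorem ptr2_conjTranspose_blockSum_mul_apply_self (h : Fin d) :
    ptr2 ((blockSum Kb)ᴴ * blockSum Kb) h h = ((∑ k, ∑ b, ‖Kb h b k‖ ^ 2 : ℝ) : ℂ) := by
  push_cast
  simp [ptr2_conjTranspose_mul_self_apply_self, Fintype.sum_prod_type, blockSum_apply,
    apply_ite]

theorem sum_norm_sq_diag_eq_one {h : Fin d} (hdiag : (Kb h).IsDiag)
    (hCDA : ptr2 ((blockSum Kb)ᴴ * blockSum Kb) = 1) :
    ∑ j, ‖Kb h j j‖ ^ 2 = 1 := by
  have h1 := congrFun (congrFun hCDA h) h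
  rw [ptr2_conjTranspose_blockSum_mul_apply_self, one_apply_eq] at h1
  have hcol : ∀ k, ∑ b, ‖Kb h b k‖ ^ 2 = ‖Kb h k k‖ ^ 2 := fun k =>
    Finset.sum_eq_single k (fun b _ hbk => by simp [hdiag hbk]) (by simp)
  simpa [hcol] using (Complex.ofReal_eq_one.mp h1)

theorem blockSum_eq_of_isDiag (hdiag : ∀ h, (Kb h).IsDiag) :
    blockSum Kb = ∑ h, ∑ j, Kb h j j • mtens (single h h 1) (single j j 1) := by
  refine Finset.sum_congr rfl fun h _ => ?_
  have hKb : Kb h = ∑ j, Kb h j j • single j j 1 := by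
    simp only [smul_single, smul_eq_mul, mul_one]
    rw [sum_single_eq_diagonal]
    exact (hdiag h).diagonal_diag.symm
  have hlin : ∀ B, mtens (single h h 1) B = kroneckerBilinear (R := ℂ) (single h h 1) B :=
    fun _ => rfl
  conv_lhs => rw [hKb, hlin, map_sum]
  simp only [map_smul, hlin]

end BlockDiagAmplitude

open BlockDiagAmplitude in
theorem stmt10_general {d : ℕ}
    (Kb : Fin d → Matrix (Fin d) (Fin d) ℂ)
    (hdist : Function.Injective Kb)
    (K : Matrix (Fin d × Fin d) (Fin d × Fin d) ℂ)
    (hK : K = ∑ h, mtens (Matrix.single h h 1) (Kb h))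
    (hCDA : ptr2 (Kᴴ * K) = 1)
    (hshift : tensL K * tensR K = tensR K * tensL K) :
    (∀ h, (Kb h).IsDiag) ∧
    ∃ κ : Fin d → Fin d → ℂ,
      (∀ h, ∑ j, ‖κ h j‖ ^ 2 = 1) ∧
      K = ∑ h, ∑ j, κ h j •
        mtens (Matrix.single h h 1) (Matrix.single j j 1) := by
  obtain rfl : K = blockSum Kb := hK
  have hdiag := isDiag_of_commute hdist hshift
  exact ⟨hdiag, fun h j => Kb h j j, fun _ => sum_norm_sq_diag_eq_one (hdiag _) hCDA,
    blockSum_eq_of_isDiag hdiag⟩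

/-- A conditional density amplitude of the form `K = Σ_h E_{hh} ⊗ K_h`
with pairwise distinct `K_h`, commuting with its right shift, is diagonalizable:
each `K_h` is diagonal and `K = Σ_{h,j} κ_{hj} E_{hh} ⊗ E_{jj}` with `(|κ_{hj}|²)` stochastic. -/
theorem stmt10 {d : ℕ} (hd : 1 ≤ d)
    (Kb : Fin d → Matrix (Fin d) (Fin d) ℂ)
    (hdist : Function.Injective Kb)
    (K : Matrix (Fin d × Fin d) (Fin d × Fin d) ℂ)
    (hK : K = ∑ h, mtens (Matrix.single h h 1) (Kb h))
    (hCDA : ptr2 (Kᴴ * K) = 1)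
    (hshift : tensL K * tensR K = tensR K * tensL K) :
    (∀ h, (Kb h).IsDiag) ∧
    ∃ κ : Fin d → Fin d → ℂ,
      (∀ h, ∑ j, ‖κ h j‖ ^ 2 = 1) ∧
      K = ∑ h, ∑ j, κ h j •
        mtens (Matrix.single h h 1) (Matrix.single j j 1) :=
  stmt10_general Kb hdist K hK hCDA hshift
end

section
/- Fix d ≥ 1 and n ∈ ℕ. Let p⁰ be a probability vector on Fin d, (p_{jk}) a d×d stochastic matrix, (e_{H;j})_{j} an orthonormal basis of ℂ^d, and for each m ∈ {0,…,n} let (e_{O_m;k})_k be an orthonormal basis of ℂ^d. On the (n+1)-fold tensor power of ℂ^d, realized as matrices indexed by functions Fin(n+1) → Fin d, define the density matrix W := Σ_{j₀,…,jₙ} p⁰_{j₀}·p_{j₀j₁}···p_{j_{n−1}jₙ} · ⊗_{m=0}^{n} |e_{H;j_m}⟩⟨e_{H;j_m}|, and for fixed outcomes k₀,…,kₙ the projection Q := ⊗_{m=0}^{n} |e_{O_m;k_m}⟩⟨e_{O_m;k_m}|. Then Trace(W·Q) = Σ_{j₀,…,jₙ} p⁰_{j₀}·p_{j₀j₁}···p_{j_{n−1}jₙ}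 · ∏_{m=0}^{n} |⟨e_{H;j_m}, e_{O_m;k_m}⟩|². Thus the restriction of a diagonalizable quantum Markov chain to any diagonal subalgebra is a classical hidden Markov process with underlying Markov chain (p⁰, p) and emission probabilities p(O_m = k | H = j) = |⟨e_{H;j}, e_{O_m;k}⟩|². -/
open BigOperators

/-- The `(n+1)`-fold tensor product of `d × d` matrices, realized as a matrix indexed by
functions `Fin (n+1) → Fin d`. -/
noncomputable def ntens {d n : ℕ} (A : Fin (n + 1) → Matrix (Fin d) (Fin d) ℂ) :
    Matrix (Fin (n + 1) → Fin d) (Fin (n + 1) → Fin d) ℂ :=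
  fun f g => ∏ m, A m (f m) (g m)

/-- The rank-one projection `|u⟩⟨u|` with entries `u_a · conj(u_b)`. -/
noncomputable def proj {d : ℕ} (u : Fin d → ℂ) : Matrix (Fin d) (Fin d) ℂ :=
  fun a b => u a * star (u b)

/-- The standard inner product `⟨u, v⟩ = Σ_a conj(u_a) v_a` on `ℂ^d`. -/
noncomputable def inprod {d : ℕ} (u v : Fin d → ℂ) : ℂ :=
  ∑ a, star (u a) * v a

/-! `Tr(W Q)` is linear in `W`; the trace of a product of two tensor products is the product of
the traces of the factorwise products, and `Tr(|u⟩⟨u| |v⟩⟨v|) = |⟨u, v⟩|²`. -/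

theorem Matrix.trace_of_prod_mul_of_prod {ι κ R : Type*} [Fintype ι] [DecidableEq ι] [Fintype κ]
    [CommSemiring R] (A B : ι → Matrix κ κ R) :
    trace (of (fun f g : ι → κ => ∏ i, A i (f i) (g i)) *
        of (fun f g : ι → κ => ∏ i, B i (f i) (g i))) =
      ∏ i, trace (A i * B i) := by
  simp only [trace, diag, mul_apply, of_apply, ← Finset.prod_mul_distrib]
  simp only [Fintype.prod_sum]

theorem trace_ntens_mul_ntens {d n : ℕ} (A B : Fin (n + 1) → Matrix (Fin d) (Fin d) ℂ) :
    Matrix.trace (ntens A * ntens B) = ∏ m, Matrix.trace (A m * B m) :=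
  Matrix.trace_of_prod_mul_of_prod A B

theorem trace_proj_mul_proj {d : ℕ} (u v : Fin d → ℂ) :
    Matrix.trace (proj u * proj v) = ((‖inprod u v‖ ^ 2 : ℝ) : ℂ) := by
  calc Matrix.trace (proj u * proj v)
      = (∑ b, star (u b) * v b) * ∑ a, star (star (u a) * v a) := by
        simp only [Matrix.trace, Matrix.diag, Matrix.mul_apply, proj, Finset.sum_mul_sum,
          star_mul', star_star]
        rw [Finset.sum_comm]
        exact Finset.sum_congr rfl fun _ _ => Finset.sum_congr rfl fun _ _ => by ring
    _ = inprod u v * (starRingEnd ℂ) (inprod u v) := by simp only [inprod, map_sum]; rfl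
    _ = ((‖inprod u v‖ ^ 2 : ℝ) : ℂ) := by rw [Complex.mul_conj']; push_cast; rfl

theorem stmt12_general {d : ℕ} (n : ℕ)
    (p0 : Fin d → ℝ)
    (p : Fin d → Fin d → ℝ)
    (eH : Fin d → (Fin d → ℂ))
    (eO : Fin (n + 1) → Fin d → (Fin d → ℂ))
    (k : Fin (n + 1) → Fin d) :
    Matrix.trace
      ((∑ j : Fin (n + 1) → Fin d,
          ((p0 (j 0) * ∏ m : Fin n, p (j m.castSucc) (j m.succ) : ℝ) : ℂ) •
            ntens (fun m => proj (eH (j m)))) *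
        ntens (fun m => proj (eO m (k m)))) =
      ∑ j : Fin (n + 1) → Fin d,
        ((p0 (j 0) * ∏ m : Fin n, p (j m.castSucc) (j m.succ) : ℝ) : ℂ) *
          ∏ m : Fin (n + 1), ((‖inprod (eH (j m)) (eO m (k m))‖ ^ 2 : ℝ) : ℂ) := by
  rw [Finset.sum_mul, Matrix.trace_sum]
  refine Finset.sum_congr rfl fun j _ => ?_
  rw [smul_mul_assoc, Matrix.trace_smul, trace_ntens_mul_ntens, smul_eq_mul]
  simp only [trace_proj_mul_proj]

/-- The restriction of a diagonalizable quantum Markov chain to a diagonal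
subalgebra is a classical hidden Markov process: `Trace(W·Q)` equals the hidden Markov joint
probability with chain `(p⁰, p)` and emission probabilities `|⟨e_{H;j}, e_{O_m;k}⟩|²`. -/
theorem stmt12 {d : ℕ} (hd : 1 ≤ d) (n : ℕ)
    (p0 : Fin d → ℝ) (hp0_nonneg : ∀ j, 0 ≤ p0 j) (hp0_sum : ∑ j, p0 j = 1)
    (p : Fin d → Fin d → ℝ)
    (hp_nonneg : ∀ j k, 0 ≤ p j k) (hp_row : ∀ j, ∑ k, p j k = 1)
    (eH : Fin d → (Fin d → ℂ))
    (heH : ∀ j j', inprod (eH j) (eH j') = if j = j' then 1 else 0)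
    (eO : Fin (n + 1) → Fin d → (Fin d → ℂ))
    (heO : ∀ m k k', inprod (eO m k) (eO m k') = if k = k' then 1 else 0)
    (k : Fin (n + 1) → Fin d) :
    Matrix.trace
      ((∑ j : Fin (n + 1) → Fin d,
          ((p0 (j 0) * ∏ m : Fin n, p (j m.castSucc) (j m.succ) : ℝ) : ℂ) •
            ntens (fun m => proj (eH (j m)))) *
        ntens (fun m => proj (eO m (k m)))) =
      ∑ j : Fin (n + 1) → Fin d,
        ((p0 (j 0) * ∏ m : Fin n, p (j m.castSucc) (j m.succ) : ℝ) : ℂ) *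
          ∏ m : Fin (n + 1), ((‖inprod (eH (j m)) (eO m (k m))‖ ^ 2 : ℝ) : ℂ) :=
  stmt12_general n p0 p eH eO k
end

section
/- Fix d ≥ 1 and n ∈ ℕ. Let p⁰ be a probability vector on Fin d; let (p_{jk}) be a d×d stochastic matrix, r_{jk} complex numbers with |r_{jk}|² = p_{jk}, and K_H := Σ_{j,k} r_{jk} E_{jj}⊗E_{kk} with E_H(x) := Tr₂(K_H* x K_H). For each m ∈ {0,…,n} let (e_{H'_m;i})_i and (e_{O'_m;j})_j be orthonormal bases of ℂ^d and let c_m : Fin d × Fin d → ℂ satisfy Σ_j |c_m(i,j)|² = 1 for every i; put K_m := Σ_{i,j} c_m(i,j)·|e_{H'_m;i}⟩⟨e_{H'_m;i}|⊗|e_{O'_m;j}⟩⟨e_{O'_m;j}| and E_m(x) := Tr₂(K_m* x K_m). Fix outcomes h₀,…,hₙ and k₀,…,kₙ in Fin d, set a_m := E_m(|e_{H'_m;h_m}⟩⟨e_{H'_m;h_m}| ⊗ |e_{O'_m;k_m}⟩⟨e_{O'_m;k_m}|), and define Bₙ := E_H(aₙ⊗1) and B_m := E_H(a_m⊗B_{m+1})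 for m = n−1,…,0. Then, writing (e_j)_j for the standard basis of ℂ^d, Tr(diag(p⁰)·B₀) = ∏_{m=0}^{n} |c_m(h_m,k_m)|² · Σ_{j₀,…,jₙ} p⁰_{j₀}·p_{j₀j₁}···p_{j_{n−1}jₙ} · ∏_{m=0}^{n} |⟨e_{j_m}, e_{H'_m;h_m}⟩|². -/
open Matrix BigOperators

/-- The standard basis vector `e_j` of `ℂ^d`. -/
noncomputable def stdb {d : ℕ} (j : Fin d) : Fin d → ℂ :=
  fun a => if a = j then 1 else 0

/-- The transition expectation `x ↦ Tr₂(K* x K)` determined by a single amplitude `K`. -/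
noncomputable def EmapK {d : ℕ} (K X : Matrix (Fin d × Fin d) (Fin d × Fin d) ℂ) :
    Matrix (Fin d) (Fin d) ℂ :=
  ptr2 (Kᴴ * X * K)

lemma starmul (z : ℂ) : star z * z = ((‖z‖^2 : ℝ) : ℂ) := by
  rw [Complex.star_def, Complex.conj_mul']; norm_cast

lemma mulstar (z : ℂ) : z * star z = ((‖z‖^2 : ℝ) : ℂ) := by
  rw [mul_comm]; exact starmul z

lemma mtens_mul {d : ℕ} (A B C D : Matrix (Fin d) (Fin d) ℂ) :
    mtens A B * mtens C D = mtens (A * C) (B * D) := by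
  ext p q
  simp only [mtens, Matrix.mul_apply, Fintype.sum_prod_type]
  rw [Finset.sum_mul_sum]
  exact Finset.sum_congr rfl fun _ _ => Finset.sum_congr rfl fun _ _ => by ring

lemma proj_mul {d : ℕ} (u v : Fin d → ℂ) :
    proj u * proj v = inprod u v • Matrix.of (fun a b => u a * star (v b)) := by
  ext a b
  simp only [Matrix.mul_apply, proj, Matrix.smul_apply, Matrix.of_apply, smul_eq_mul,
    inprod, Finset.sum_mul]
  exact Finset.sum_congr rfl fun c _ => by ring

lemma mtens_smul_smul {d : ℕ} (s t : ℂ) (A B : Matrix (Fin d) (Fin d) ℂ) :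
    mtens (s • A) (t • B) = (s * t) • mtens A B := by
  ext p q
  simp only [mtens, Matrix.smul_apply, smul_eq_mul]
  ring

lemma mtens_proj_herm {d : ℕ} (u v : Fin d → ℂ) :
    (mtens (proj u) (proj v))ᴴ = mtens (proj u) (proj v) := by
  ext p q
  simp only [Matrix.conjTranspose_apply, mtens, proj, star_mul', star_star]
  ring

lemma stdb_inprod {d : ℕ} (j : Fin d) (v : Fin d → ℂ) :
    inprod (stdb j) v = v j := by
  simp [inprod, stdb, apply_ite, ite_mul]

lemma kh_apply {d : ℕ} (r : Fin d → Fin d → ℂ) (x y : Fin d × Fin d) :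
    (∑ j, ∑ k, r j k • mtens (Matrix.single j j 1) (Matrix.single k k 1)
      : Matrix (Fin d × Fin d) (Fin d × Fin d) ℂ) x y
      = if x = y then r x.1 x.2 else 0 := by
  simp only [Matrix.sum_apply, Matrix.smul_apply, mtens, Matrix.single,
    Matrix.of_apply, smul_eq_mul, mul_ite, mul_one, mul_zero, ite_and]
  rw [Finset.sum_comm]
  simp [Finset.sum_ite_eq, Prod.ext_iff]
  aesop

lemma emap_diagK {d : ℕ} (K X : Matrix (Fin d × Fin d) (Fin d × Fin d) ℂ)
    (g : Fin d × Fin d → ℂ) (hK : ∀ x y, K x y = if x = y then g x else 0) (i j : Fin d) :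
    EmapK K X i j = ∑ s, star (g (i, s)) * X (i, s) (j, s) * g (j, s) := by
  simp [EmapK, ptr2, Matrix.mul_apply, Matrix.conjTranspose_apply, hK, apply_ite,
    ite_mul, mul_ite, mul_zero, zero_mul, Finset.sum_ite_eq, Finset.sum_ite_eq']

lemma a_diag {d : ℕ} (cm : Fin d → Fin d → ℂ) (eH eO : Fin d → Fin d → ℂ) (hm km : Fin d)
    (horthH : ∀ α α', inprod (eH α) (eH α') = if α = α' then 1 else 0)
    (horthO : ∀ β β', inprod (eO β) (eO β') = if β = β' then 1 else 0)
    (i : Fin d) :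
    EmapK (∑ α, ∑ β, cm α β • mtens (proj (eH α)) (proj (eO β)))
        (mtens (proj (eH hm)) (proj (eO km))) i i
      = ((‖cm hm km‖^2 : ℝ) : ℂ) * ((‖eH hm i‖^2 : ℝ) : ℂ) := by
  set X := mtens (proj (eH hm)) (proj (eO km)) with hX
  set K : Matrix (Fin d × Fin d) (Fin d × Fin d) ℂ :=
    ∑ α, ∑ β, cm α β • mtens (proj (eH α)) (proj (eO β)) with hK
  have hXK : X * K = cm hm km • X := by
    calc X * K = ∑ α, ∑ β, cm α β • (X * mtens (proj (eH α)) (proj (eO β))) := by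
          rw [hK, Finset.mul_sum]
          exact Finset.sum_congr rfl fun α _ => by
            rw [Finset.mul_sum]
            exact Finset.sum_congr rfl fun β _ => (mul_smul_comm _ _ _)
      _ = ∑ α, ∑ β, (cm α β * ((if hm = α then 1 else 0) * (if km = β then 1 else 0))) •
            mtens (Matrix.of fun a b => eH hm a * star (eH α b))
                  (Matrix.of fun a b => eO km a * star (eO β b)) := by
          refine Finset.sum_congr rfl fun α _ => Finset.sum_congr rfl fun β _ => ?_
          rw [hX, mtens_mul, proj_mul, proj_mul, mtens_smul_smul, smul_smul,
            horthH, horthO]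
      _ = cm hm km • X := by
          simp only [ite_mul, mul_ite, mul_zero, mul_one, zero_mul, one_mul, ite_smul,
            zero_smul, Finset.sum_ite_eq, Finset.mem_univ, if_true]
          rw [hX]
          rfl
  have hXherm : Xᴴ = X := mtens_proj_herm (eH hm) (eO km)
  have hKX : Kᴴ * X = star (cm hm km) • X := by
    have h1 := congrArg Matrix.conjTranspose hXK
    rw [Matrix.conjTranspose_mul, hXherm, Matrix.conjTranspose_smul, hXherm] at h1
    exact h1
  have hfull : Kᴴ * X * K = (star (cm hm km) * cm hm km) • X := by
    rw [hKX, Matrix.smul_mul, hXK, smul_smul]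
  rw [EmapK, hfull]
  simp only [ptr2, Matrix.smul_apply, hX, mtens, proj, smul_eq_mul]
  have hterm : ∀ s, (star (cm hm km) * cm hm km) *
      (eH hm i * star (eH hm i) * (eO km s * star (eO km s)))
      = ((star (cm hm km) * cm hm km) * (eH hm i * star (eH hm i))) *
        (eO km s * star (eO km s)) := fun s => by ring
  simp_rw [hterm]
  rw [← Finset.mul_sum]
  have hoo : ∑ s, eO km s * star (eO km s) = 1 := by
    have h1 : ∑ s, eO km s * star (eO km s) = inprod (eO km) (eO km) := by
      unfold inprod; exact Finset.sum_congr rfl fun s _ => mul_comm _ _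
    rw [h1, horthO]; simp
  rw [hoo, mul_one, starmul, mulstar]

lemma pathkey {d : ℕ} (P : Fin d → Fin d → ℂ) :
    ∀ (N : ℕ) (q : ℕ → Fin d → ℂ) (D : ℕ → Fin d → ℂ) (w : Fin d → ℂ),
      (∀ i, D N i = q N i) →
      (∀ m, m < N → ∀ i, D m i = q m i * ∑ s, P i s * D (m + 1) s) →
      ∑ i, w i * D 0 i =
        ∑ j : Fin (N + 1) → Fin d,
          w (j 0) * (∏ m : Fin N, P (j m.castSucc) (j m.succ)) *
            ∏ m : Fin (N + 1), q m (j m) := by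
  intro N
  induction N with
  | zero =>
    intro q D w hN _
    rw [← Equiv.sum_comp (Equiv.funUnique (Fin 1) (Fin d)).symm]
    simp only [Equiv.funUnique_symm_apply, Fin.prod_univ_zero, Fin.prod_univ_one,
      Fin.val_zero, mul_one, one_mul]
    refine Finset.sum_congr rfl fun i _ => ?_
    rw [hN]
    show w i * q 0 i = w i * ∏ x : Fin 1, q (↑x) i
    rw [Fin.prod_univ_one]
    norm_num
  | succ N ih =>
    intro q D w hN hrec
    have hN' : ∀ i, (fun m => D (m + 1)) N i = (fun m => q (m + 1)) N i := fun i => hN i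
    have hrec' : ∀ m, m < N → ∀ i, (fun m => D (m + 1)) m i =
        (fun m => q (m + 1)) m i * ∑ s, P i s * (fun m => D (m + 1)) (m + 1) s :=
      fun m hm i => hrec (m + 1) (by omega) i
    have key := ih (fun m => q (m + 1)) (fun m => D (m + 1))
      (fun s => ∑ i, w i * q 0 i * P i s) hN' hrec'
    calc ∑ i, w i * D 0 i
        = ∑ i, ∑ s, (w i * q 0 i * P i s) * D 1 s := by
          refine Finset.sum_congr rfl fun i _ => ?_
          rw [hrec 0 (by omega) i, Finset.mul_sum, Finset.mul_sum]
          exact Finset.sum_congr rfl fun s _ => by ring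
      _ = ∑ s, (∑ i, w i * q 0 i * P i s) * D 1 s := by
          rw [Finset.sum_comm]
          exact Finset.sum_congr rfl fun s _ => (Finset.sum_mul _ _ _).symm
      _ = ∑ j' : Fin (N + 1) → Fin d,
            (∑ i, w i * q 0 i * P i (j' 0)) *
              (∏ m : Fin N, P (j' m.castSucc) (j' m.succ)) *
              ∏ m : Fin (N + 1), q (↑m + 1) (j' m) := key
      _ = _ := by
          conv_rhs => rw [← Equiv.sum_comp (Fin.consEquiv fun _ => Fin d),
            Fintype.sum_prod_type]
          rw [Finset.sum_comm]
          refine Finset.sum_congr rfl fun j' _ => ?_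
          rw [Finset.sum_mul, Finset.sum_mul]
          refine Finset.sum_congr rfl fun x _ => ?_
          simp only [Fin.consEquiv_apply, Fin.prod_univ_succ, Fin.cons_zero, Fin.cons_succ,
            Fin.castSucc_zero, ← Fin.succ_castSucc, Fin.val_succ, Fin.val_zero]
          ring

/-- The diagonal restriction of the quantum hidden Markov process factors
into the emission probabilities `|c_m(h_m,k_m)|²` times the joint law of the diagonal
restriction of the diagonalizable quantum Markov chain. -/
theorem stmt14 {d : ℕ} (hd : 1 ≤ d) (n : ℕ)
    (p0 : Fin d → ℝ) (hp0_nonneg : ∀ j, 0 ≤ p0 j) (hp0_sum : ∑ j, p0 j = 1)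
    (p : Fin d → Fin d → ℝ)
    (hp_nonneg : ∀ j k, 0 ≤ p j k) (hp_row : ∀ j, ∑ k, p j k = 1)
    (r : Fin d → Fin d → ℂ) (hr : ∀ j k, ‖r j k‖ ^ 2 = p j k)
    (KH : Matrix (Fin d × Fin d) (Fin d × Fin d) ℂ)
    (hKH : KH = ∑ j, ∑ k, r j k •
        mtens (Matrix.single j j 1) (Matrix.single k k 1))
    (eH' eO' : ℕ → Fin d → (Fin d → ℂ))
    (heH' : ∀ m ≤ n, ∀ i i',
      inprod (eH' m i) (eH' m i') = if i = i' then 1 else 0)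
    (heO' : ∀ m ≤ n, ∀ j j',
      inprod (eO' m j) (eO' m j') = if j = j' then 1 else 0)
    (c : ℕ → Fin d → Fin d → ℂ)
    (hc : ∀ m ≤ n, ∀ i, ∑ j, ‖c m i j‖ ^ 2 = 1)
    (Km : ℕ → Matrix (Fin d × Fin d) (Fin d × Fin d) ℂ)
    (hKm : ∀ m, Km m = ∑ i, ∑ j, c m i j • mtens (proj (eH' m i)) (proj (eO' m j)))
    (h k : ℕ → Fin d)
    (a : ℕ → Matrix (Fin d) (Fin d) ℂ)
    (ha : ∀ m, a m = EmapK (Km m) (mtens (proj (eH' m (h m))) (proj (eO' m (k m)))))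
    (B : ℕ → Matrix (Fin d) (Fin d) ℂ)
    (hBn : B n = EmapK KH (mtens (a n) 1))
    (hBrec : ∀ m, m < n → B m = EmapK KH (mtens (a m) (B (m + 1)))) :
    Matrix.trace ((Matrix.diagonal fun i => (p0 i : ℂ)) * B 0) =
      (∏ m ∈ Finset.range (n + 1), ((‖c m (h m) (k m)‖ ^ 2 : ℝ) : ℂ)) *
        ∑ j : Fin (n + 1) → Fin d,
          (p0 (j 0) : ℂ) * (∏ m : Fin n, ((p (j m.castSucc) (j m.succ) : ℝ) : ℂ)) *
            ∏ m : Fin (n + 1), ((‖inprod (stdb (j m)) (eH' m (h m))‖ ^ 2 : ℝ) : ℂ) := by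
  -- the single-step diagonal formula for the homogeneous transition expectation
  have hKHentry : ∀ x y : Fin d × Fin d, KH x y = if x = y then r x.1 x.2 else 0 := by
    intro x y; rw [hKH]; exact kh_apply r x y
  have L1 : ∀ (A Bm : Matrix (Fin d) (Fin d) ℂ) (i : Fin d),
      EmapK KH (mtens A Bm) i i = A i i * ∑ s, ((p i s : ℝ) : ℂ) * Bm s s := by
    intro A Bm i
    rw [emap_diagK KH (mtens A Bm) (fun x => r x.1 x.2) hKHentry i i]
    rw [Finset.mul_sum]
    refine Finset.sum_congr rfl fun s _ => ?_
    have : star (r i s) * (mtens A Bm (i, s) (i, s)) * r i s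
        = (star (r i s) * r i s) * (A i i * Bm s s) := by
      simp only [mtens]; ring
    rw [this, starmul, hr]
    ring
  -- the diagonal of `a m`
  have hq : ∀ m ≤ n, ∀ i : Fin d,
      a m i i = ((‖c m (h m) (k m)‖^2 : ℝ) : ℂ) * ((‖eH' m (h m) i‖^2 : ℝ) : ℂ) := by
    intro m hm i
    rw [ha m, hKm m]
    exact a_diag (c m) (eH' m) (eO' m) (h m) (k m) (heH' m hm) (heO' m hm) i
  set q : ℕ → Fin d → ℂ :=
    fun m i => ((‖c m (h m) (k m)‖^2 : ℝ) : ℂ) * ((‖eH' m (h m) i‖^2 : ℝ) : ℂ) with hqdef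
  have hDn : ∀ i, B n i i = q n i := by
    intro i
    rw [hBn, L1, hq n le_rfl i]
    have : ∑ s, ((p i s : ℝ) : ℂ) * (1 : Matrix (Fin d) (Fin d) ℂ) s s = 1 := by
      simp only [Matrix.one_apply_eq, mul_one]
      rw [← Complex.ofReal_sum, hp_row i, Complex.ofReal_one]
    rw [this, mul_one]
  have hDrec : ∀ m, m < n → ∀ i, B m i i = q m i * ∑ s, ((p i s : ℝ) : ℂ) * B (m + 1) s s := by
    intro m hm i
    rw [hBrec m hm, L1, hq m (le_of_lt hm) i]
  have htr : Matrix.trace ((Matrix.diagonal fun i => (p0 i : ℂ)) * B 0)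
      = ∑ i, (p0 i : ℂ) * B 0 i i := by
    simp [Matrix.trace, Matrix.diag, Matrix.mul_apply, Matrix.diagonal, ite_mul,
      zero_mul, Finset.sum_ite_eq]
  rw [htr, pathkey (fun i s => ((p i s : ℝ) : ℂ)) n q (fun m i => B m i i)
    (fun i => (p0 i : ℂ)) hDn hDrec]
  -- massage the right-hand side
  rw [Finset.mul_sum]
  refine Finset.sum_congr rfl fun j _ => ?_
  have hsp : ∀ m : Fin (n + 1), inprod (stdb (j m)) (eH' m (h m)) = eH' m (h m) (j m) :=
    fun m => stdb_inprod (j m) (eH' m (h m))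
  simp only [hsp, hqdef]
  rw [Finset.prod_mul_distrib, Finset.prod_range]
  ring
end

section
/- Let S_H and S_O be finite nonempty sets with the discrete σ-algebras, (Ω, F, μ) a probability space, and Hₙ : Ω → S_H, Oₙ : Ω → S_O measurable for n ∈ ℕ. The following are equivalent. (A) For every n ∈ ℕ and all functions f : S_O → ℝ, g : S_H → ℝ: μ-a.e., E[ f(O_{n+1})·g(H_{n+1}) | σ(H₀,O₀,…,Hₙ,Oₙ) ] = E[ f(O_{n+1}) | σ(Hₙ) ] · E[ g(H_{n+1}) | σ(Hₙ) ] (the backward hidden Markov condition). (B) Both: (i) (Hₙ) is a Markov chain, i.e. for every n and every g : S_H → ℝ, μ-a.e. E[ g(H_{n+1}) | σ(H₀,…,Hₙ) ] = E[ g(H_{n+1}) | σ(Hₙ) ]; and (ii) for every n and all f₀,…,fₙ : S_O → ℝ, μ-a.e. E[ ∏_{m=0}^{n} f_m(O_m) | σ(H₀,…,Hₙ) ] = ∏_{m=0}^{n} E[ f_m(O_m) | σ(H_{m−1}) ], with the convention that for m = 0 the conditioning σ-algebra σ(H_{−1}) means σ(H₀) (the time-consecutive conditional independence condition). -/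
/-!
Every σ-algebra here is generated by finitely many finite-valued variables, so a conditional
expectation given `σ(H₀,…,Hₙ)` or `σ(H₀,O₀,…,Hₙ,Oₙ)` is determined by its integrals over the
atoms `{H₀ = y₀, …, Hₙ = yₙ}` (resp. `{… , O₀ = o₀, …, Oₙ = oₙ}`), and each condition becomes a
factorisation of such integrals through the elementary kernels `E[g(Hₙ₊₁) | Hₙ = ·]` and
`E[f(Oₘ) | Hₘ₋₁ = ·]`.

(A) with `f = 1` says that conditioning `g(Hₙ₊₁)` on the past of both processes is the same as
conditioning on `Hₙ`, and `σ(H₀,…,Hₙ)` lies in between: this is the Markov property. The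
time-consecutive condition follows by induction on `n`: on `{H₀ = y₀, …, Hₙ₊₁ = yₙ₊₁}` the
product `∏ fₘ(Oₘ)` splits as a `σ(H₀,O₀,…,Hₙ,Oₙ)`-measurable factor times
`fₙ₊₁(Oₙ₊₁) · 1{Hₙ₊₁ = yₙ₊₁}`, whose conditional expectation (A) computes. Conversely, on an atom
of `σ(H₀,O₀,…,Hₙ,Oₙ)` the integrand `f(Oₙ₊₁) g(Hₙ₊₁)` is `g(Hₙ₊₁)` times the product
`∏ₘ≤ₙ 1{Oₘ = oₘ} · f(Oₙ₊₁)`, to which (B)(ii) at time `n + 1` applies; (B)(i) then integrates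
`g(Hₙ₊₁)` and (B)(ii) at time `n` gives the mass of the atom.
-/

open MeasureTheory BigOperators

/-- The σ-algebra `σ(H₀,O₀,…,Hₙ,Oₙ)` generated by the first `n+1` hidden and observable
variables (discrete σ-algebras on the state spaces). -/
def sigHO {Ω S_H S_O : Type*} (H : ℕ → Ω → S_H) (O : ℕ → Ω → S_O) (n : ℕ) :
    MeasurableSpace Ω :=
  ⨆ m ∈ Finset.range (n + 1),
    (MeasurableSpace.comap (H m) ⊤ ⊔ MeasurableSpace.comap (O m) ⊤)

/-- The σ-algebra `σ(H₀,…,Hₙ)`. -/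
def sigHs {Ω S_H : Type*} (H : ℕ → Ω → S_H) (n : ℕ) : MeasurableSpace Ω :=
  ⨆ m ∈ Finset.range (n + 1), MeasurableSpace.comap (H m) ⊤

/-- The σ-algebra `σ(Hₙ)`. -/
def sigH {Ω S_H : Type*} (H : ℕ → Ω → S_H) (n : ℕ) : MeasurableSpace Ω :=
  MeasurableSpace.comap (H n) ⊤

lemma prod_range_succ_update {M : Type*} [CommMonoid M] {γ : Type*} (G : ℕ → γ → M)
    (u : ℕ → γ) (n : ℕ) (a : γ) :
    ∏ m ∈ Finset.range (n + 2), G m (Function.update u (n + 1) a m) =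
      (∏ m ∈ Finset.range (n + 1), G m (u m)) * G (n + 1) a := by
  rw [Finset.prod_range_succ, Function.update_self]
  congr 1
  refine Finset.prod_congr rfl fun m hm => ?_
  rw [Function.update_of_ne (by simp at hm; omega)]

section Discrete

variable {Ω T : Type*} {mΩ : MeasurableSpace Ω} {μ : Measure Ω}

lemma memLp_top_comp_of_finite [Finite T] {Y : Ω → T} (hY : @Measurable Ω T _ ⊤ Y) (φ : T → ℝ) :
    MemLp (fun ω => φ (Y ω)) ⊤ μ :=
  memLp_top_of_bound (measurable_from_top.comp hY).aestronglyMeasurable (⨆ t, ‖φ t‖)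
    (ae_of_all _ fun ω => le_ciSup (Set.finite_range fun t => ‖φ t‖).bddAbove (Y ω))

lemma integrable_comp_of_finite [IsFiniteMeasure μ] [Finite T] {Y : Ω → T}
    (hY : @Measurable Ω T _ ⊤ Y) (φ : T → ℝ) : Integrable (fun ω => φ (Y ω)) μ :=
  (memLp_top_comp_of_finite hY φ).integrable le_top

lemma setIntegral_inter_preimage_singleton {Y : Ω → T} {t : T}
    (hY : MeasurableSet (Y ⁻¹' {t})) (s : Set Ω) (F : Ω → ℝ) :
    ∫ ω in s ∩ Y ⁻¹' {t}, F ω ∂μ = ∫ ω in s, F ω * ({t} : Set T).indicator 1 (Y ω) ∂μ := by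
  rw [← setIntegral_indicator hY]
  congr with ω
  by_cases h : Y ω = t <;> simp [h]

/-- `E[X | Y = t]`; it is `0` on a null fibre. -/
noncomputable def fiberMean (μ : Measure Ω) (Y : Ω → T) (X : Ω → ℝ) (t : T) : ℝ :=
  (∫ ω in Y ⁻¹' {t}, X ω ∂μ) / μ.real (Y ⁻¹' {t})

lemma setIntegral_fiber_eq_mul_fiberMean [IsFiniteMeasure μ] (Y : Ω → T) (X : Ω → ℝ) (t : T) :
    ∫ ω in Y ⁻¹' {t}, X ω ∂μ = μ.real (Y ⁻¹' {t}) * fiberMean μ Y X t := by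
  rcases eq_or_ne (μ.real (Y ⁻¹' {t})) 0 with h | h
  · simp [Measure.restrict_eq_zero.mpr ((measureReal_eq_zero_iff).mp h), h]
  · rw [fiberMean, mul_div_cancel₀ _ h]

theorem condExp_comap_ae_eq_of_setIntegral_fiber [IsFiniteMeasure μ] [Finite T] {Y : Ω → T}
    (hY : @Measurable Ω T _ ⊤ Y) {X : Ω → ℝ} (hX : Integrable X μ) (φ : T → ℝ)
    (h : ∀ t, ∫ ω in Y ⁻¹' {t}, X ω ∂μ = μ.real (Y ⁻¹' {t}) * φ t) :
    μ[X | MeasurableSpace.comap Y ⊤] =ᵐ[μ] fun ω => φ (Y ω) := by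
  have hφY := integrable_comp_of_finite (μ := μ) hY φ
  refine (ae_eq_condExp_of_forall_setIntegral_eq hY.comap_le hX
    (fun _ _ _ => hφY.integrableOn) ?_
    (measurable_from_top.comp (comap_measurable Y)).aestronglyMeasurable).symm
  rintro _ ⟨u, -, rfl⟩ -
  have hsplit : ∀ F : Ω → ℝ, Integrable F μ → ∫ ω in Y ⁻¹' u, F ω ∂μ =
      ∑ t ∈ (Set.toFinite u).toFinset, ∫ ω in Y ⁻¹' {t}, F ω ∂μ := fun F hF => by
    rw [← integral_biUnion_finset _ (fun t _ => hY trivial)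
      (fun s _ t _ hst => Set.disjoint_singleton.mpr hst |>.preimage Y)
      (fun t _ => hF.integrableOn)]
    simp
  rw [hsplit _ hφY, hsplit _ hX]
  refine Finset.sum_congr rfl fun t _ => ?_
  rw [h t, setIntegral_congr_fun (hY trivial) (g := fun _ => φ t) fun ω hω => by rw [hω],
    setIntegral_const, smul_eq_mul]

theorem condExp_comap_ae_eq_fiberMean [IsFiniteMeasure μ] [Finite T] {Y : Ω → T}
    (hY : @Measurable Ω T _ ⊤ Y) {X : Ω → ℝ} (hX : Integrable X μ) :
    μ[X | MeasurableSpace.comap Y ⊤] =ᵐ[μ] fun ω => fiberMean μ Y X (Y ω) :=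
  condExp_comap_ae_eq_of_setIntegral_fiber hY hX _ (setIntegral_fiber_eq_mul_fiberMean Y X)

end Discrete

section CondExp

variable {Ω : Type*} {mΩ : MeasurableSpace Ω} {μ : Measure Ω} [IsFiniteMeasure μ]

lemma condExp_ae_eq_of_le_of_condExp_ae_eq {E : Type*} [NormedAddCommGroup E] [NormedSpace ℝ E]
    [CompleteSpace E] {m₁ m₂ m₃ : MeasurableSpace Ω} (h₁₂ : m₁ ≤ m₂) (h₂₃ : m₂ ≤ m₃)
    (h₃ : m₃ ≤ mΩ) {X : Ω → E} (h : μ[X | m₃] =ᵐ[μ] μ[X | m₁]) : μ[X | m₂] =ᵐ[μ] μ[X | m₁] :=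
  calc μ[X | m₂] =ᵐ[μ] μ[μ[X | m₃] | m₂] := (condExp_condExp_of_le h₂₃ h₃).symm
    _ =ᵐ[μ] μ[μ[X | m₁] | m₂] := condExp_congr_ae h
    _ = μ[X | m₁] := condExp_of_stronglyMeasurable (h₂₃.trans h₃)
      (stronglyMeasurable_condExp.mono h₁₂) integrable_condExp

lemma setIntegral_mul_condExp {m : MeasurableSpace Ω} (hm : m ≤ mΩ) {s : Set Ω}
    (hs : MeasurableSet[m] s) {W X : Ω → ℝ} (hW : StronglyMeasurable[m] W)
    (hWX : Integrable (fun ω => W ω * X ω) μ) (hX : Integrable X μ) :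
    ∫ ω in s, W ω * X ω ∂μ = ∫ ω in s, W ω * μ[X | m] ω ∂μ := by
  rw [← setIntegral_condExp hm hWX hs]
  exact setIntegral_congr_ae (hm s hs)
    ((condExp_mul_of_stronglyMeasurable_left hW hWX hX).mono fun _ hω _ => hω)

end CondExp

section Paths

variable {Ω α β : Type*} {mΩ : MeasurableSpace Ω} {μ : Measure Ω}

def pathEvent (X : ℕ → Ω → α) (n : ℕ) (x : ℕ → α) : Set Ω :=
  ⋂ m ∈ Finset.range (n + 1), X m ⁻¹' {x m}

lemma mem_pathEvent {X : ℕ → Ω → α} {n : ℕ} {x : ℕ → α} {ω : Ω} :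
    ω ∈ pathEvent X n x ↔ ∀ m ∈ Finset.range (n + 1), X m ω = x m := by
  simp [pathEvent]

lemma comap_le_sigHs (X : ℕ → Ω → α) {m n : ℕ} (hm : m ∈ Finset.range (n + 1)) :
    MeasurableSpace.comap (X m) ⊤ ≤ sigHs X n :=
  le_iSup₂ (f := fun m (_ : m ∈ Finset.range (n + 1)) => MeasurableSpace.comap (X m) ⊤) m hm

lemma sigHs_le {X : ℕ → Ω → α} (hX : ∀ m, @Measurable Ω α _ ⊤ (X m)) (n : ℕ) :
    sigHs X n ≤ mΩ :=
  iSup₂_le fun m _ => (hX m).comap_le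

lemma sigHs_mono (X : ℕ → Ω → α) : Monotone (sigHs X) := fun _ _ hnk =>
  iSup₂_le fun _ hm => comap_le_sigHs X (by simp at hm ⊢; omega)

lemma sigH_le_sigHs (X : ℕ → Ω → α) (n : ℕ) : sigH X n ≤ sigHs X n :=
  comap_le_sigHs X (Finset.self_mem_range_succ n)

lemma measurableSet_pathEvent (X : ℕ → Ω → α) (n : ℕ) (x : ℕ → α) :
    MeasurableSet[sigHs X n] (pathEvent X n x) :=
  Finset.measurableSet_biInter _ fun _ hm => comap_le_sigHs X hm _ ⟨_, trivial, rfl⟩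

lemma measurable_comp_sigHs (X : ℕ → Ω → α) {m n : ℕ} (hm : m ∈ Finset.range (n + 1))
    (φ : α → ℝ) : Measurable[sigHs X n] fun ω => φ (X m ω) :=
  (measurable_from_top.comp (comap_measurable (X m))).mono (comap_le_sigHs X hm) le_rfl

lemma comap_prodMk_top [Countable α] [Countable β] (X : Ω → α) (Y : Ω → β) :
    MeasurableSpace.comap (fun ω => (X ω, Y ω)) ⊤ =
      MeasurableSpace.comap X ⊤ ⊔ MeasurableSpace.comap Y ⊤ := by
  let : MeasurableSpace α := ⊤
  let : MeasurableSpace β := ⊤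
  rw [← MeasurableSpace.comap_prodMk, ← top_unique fun s _ => MeasurableSet.of_discrete]
  rfl

lemma sigHO_eq_sigHs_prodMk [Countable α] [Countable β] (H : ℕ → Ω → α) (O : ℕ → Ω → β)
    (n : ℕ) : sigHO H O n = sigHs (fun m ω => (H m ω, O m ω)) n := by
  simp only [sigHO, sigHs, comap_prodMk_top]

lemma sigHs_eq_comap_restrict [Countable α] (X : ℕ → Ω → α) (n : ℕ) :
    sigHs X n =
      MeasurableSpace.comap (fun ω => (Finset.range (n + 1)).restrict fun m => X m ω) ⊤ := by
  let : MeasurableSpace α := ⊤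
  rw [← top_unique fun s _ => MeasurableSet.of_discrete, MeasurableSpace.pi,
    MeasurableSpace.comap_iSup, sigHs, iSup_subtype']
  simp_rw [MeasurableSpace.comap_comp]
  rfl

lemma pathEvent_zero (X : ℕ → Ω → α) (x : ℕ → α) : pathEvent X 0 x = X 0 ⁻¹' {x 0} := by
  simp [pathEvent]

lemma pathEvent_succ (X : ℕ → Ω → α) (n : ℕ) (x : ℕ → α) :
    pathEvent X (n + 1) x = pathEvent X n x ∩ X (n + 1) ⁻¹' {x (n + 1)} := by
  rw [pathEvent, Finset.range_add_one, Finset.set_biInter_insert, Set.inter_comm, pathEvent]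

lemma pathEvent_prodMk (H : ℕ → Ω → α) (O : ℕ → Ω → β) (n : ℕ) (p : ℕ → α × β) :
    pathEvent (fun m ω => (H m ω, O m ω)) n p =
      pathEvent H n (fun m => (p m).1) ∩ pathEvent O n (fun m => (p m).2) := by
  ext ω
  simp only [Set.mem_inter_iff, mem_pathEvent, Prod.ext_iff]
  exact ⟨fun h => ⟨fun m hm => (h m hm).1, fun m hm => (h m hm).2⟩,
    fun h m hm => ⟨h.1 m hm, h.2 m hm⟩⟩

lemma prod_indicator_one_eq_indicator_pathEvent (X : ℕ → Ω → α) (n : ℕ) (x : ℕ → α) (ω : Ω) :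
    ∏ m ∈ Finset.range (n + 1), ({x m} : Set α).indicator 1 (X m ω) =
      (pathEvent X n x).indicator (1 : Ω → ℝ) ω := by
  have h := prod_indicator_const_apply (Finset.range (n + 1)) (fun m => X m ⁻¹' {x m}) (1 : Ω → ℝ) ω
  rw [one_pow] at h
  rw [pathEvent, ← h]
  exact Finset.prod_congr rfl fun m _ => (Set.indicator_comp_right (X m)).symm

lemma prod_update_indicator_eq_indicator_pathEvent (X : ℕ → Ω → α) (n : ℕ) (x : ℕ → α)
    (f : α → ℝ) (ω : Ω) :
    ∏ m ∈ Finset.range (n + 2),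
        Function.update (fun m => ({x m} : Set α).indicator 1) (n + 1) f m (X m ω) =
      (pathEvent X n x).indicator (fun ω => f (X (n + 1) ω)) ω := by
  rw [prod_range_succ_update (fun m (h : α → ℝ) => h (X m ω)),
    prod_indicator_one_eq_indicator_pathEvent]
  by_cases h : ω ∈ pathEvent X n x <;> simp [h]

lemma memLp_top_prod_comp [Finite α] {X : ℕ → Ω → α} (hX : ∀ m, @Measurable Ω α _ ⊤ (X m))
    (s : Finset ℕ) (f : ℕ → α → ℝ) : MemLp (fun ω => ∏ m ∈ s, f m (X m ω)) ⊤ μ := by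
  simpa using MemLp.prod' (p := fun _ => ⊤) fun m _ =>
    memLp_top_comp_of_finite (μ := μ) (hX m) (f m)

lemma setIntegral_pathEvent_mul_comp {X : ℕ → Ω → α} (hX : ∀ m, @Measurable Ω α _ ⊤ (X m))
    {n : ℕ} {φ : (ℕ → α) → ℝ}
    (hφ : ∀ x x', (∀ m ∈ Finset.range (n + 1), x m = x' m) → φ x = φ x') (F : Ω → ℝ)
    (x : ℕ → α) :
    ∫ ω in pathEvent X n x, F ω * φ (fun m => X m ω) ∂μ =
      (∫ ω in pathEvent X n x, F ω ∂μ) * φ x := by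
  rw [← integral_mul_const]
  exact setIntegral_congr_fun (sigHs_le hX n _ (measurableSet_pathEvent X n x))
    fun ω hω => by rw [hφ _ _ (mem_pathEvent.mp hω)]

lemma sigHs_le_sigHO (H : ℕ → Ω → α) (O : ℕ → Ω → β) (n : ℕ) : sigHs H n ≤ sigHO H O n :=
  iSup₂_mono fun _ _ => le_sup_left

lemma sigHO_le {H : ℕ → Ω → α} {O : ℕ → Ω → β} (hH : ∀ m, @Measurable Ω α _ ⊤ (H m))
    (hO : ∀ m, @Measurable Ω β _ ⊤ (O m)) (n : ℕ) : sigHO H O n ≤ mΩ :=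
  iSup₂_le fun m _ => sup_le (hH m).comap_le (hO m).comap_le

lemma measurable_prodMk_top [Countable α] [Countable β] {X : Ω → α} {Y : Ω → β}
    (hX : @Measurable Ω α _ ⊤ X) (hY : @Measurable Ω β _ ⊤ Y) :
    @Measurable Ω (α × β) _ ⊤ fun ω => (X ω, Y ω) :=
  measurable_iff_comap_le.mpr (by rw [comap_prodMk_top]; exact sup_le hX.comap_le hY.comap_le)

theorem condExp_sigHs_ae_eq_iff [IsFiniteMeasure μ] [Finite α] {X : ℕ → Ω → α}
    (hX : ∀ m, @Measurable Ω α _ ⊤ (X m)) {n : ℕ} {F : Ω → ℝ} (hF : Integrable F μ)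
    {φ : (ℕ → α) → ℝ} (hφ : ∀ x x', (∀ m ∈ Finset.range (n + 1), x m = x' m) → φ x = φ x') :
    μ[F | sigHs X n] =ᵐ[μ] (fun ω => φ (fun m => X m ω)) ↔
      ∀ x, ∫ ω in pathEvent X n x, F ω ∂μ = μ.real (pathEvent X n x) * φ x := by
  have hle := sigHs_le hX n
  constructor
  · intro h x
    have hE := hle _ (measurableSet_pathEvent X n x)
    rw [← setIntegral_condExp hle hF (measurableSet_pathEvent X n x),
      setIntegral_congr_ae hE (h.mono fun ω hω _ => hω),
      setIntegral_congr_fun hE (g := fun _ => φ x) fun ω hω => hφ _ _ (mem_pathEvent.mp hω),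
      setIntegral_const, smul_eq_mul]
  · intro h
    set Y := fun ω => (Finset.range (n + 1)).restrict fun m => X m ω
    -- a right inverse of the restriction that needs no default value in `α`
    let extend : (Finset.range (n + 1) → α) → ℕ → α := fun z m => z ⟨min m n, by simp⟩
    have hext : ∀ z, ∀ m (hm : m ∈ Finset.range (n + 1)), extend z m = z ⟨m, hm⟩ := by
      intro z m hm
      simp only [extend, Finset.mem_range] at hm ⊢
      congr
      omega
    have hY : @Measurable Ω _ _ ⊤ Y :=
      measurable_iff_comap_le.mpr (sigHs_eq_comap_restrict X n ▸ hle)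
    rw [sigHs_eq_comap_restrict]
    refine (condExp_comap_ae_eq_of_setIntegral_fiber hY hF (fun z => φ (extend z))
      fun t => ?_).trans (.of_eq (funext fun ω => hφ _ _ fun m hm => hext _ m hm))
    have hfiber : Y ⁻¹' {t} = pathEvent X n (extend t) := by
      ext ω
      simp only [Set.mem_preimage, Set.mem_singleton_iff, mem_pathEvent, funext_iff, Y]
      constructor
      · intro hω m hm
        rw [hext t m hm]
        exact hω ⟨m, hm⟩
      · rintro hω ⟨m, hm⟩
        exact (hω m hm).trans (hext t m hm)
    rw [hfiber, h]

end Paths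

section Conditions

variable {Ω S_H S_O : Type*} {mΩ : MeasurableSpace Ω}

def IsBackwardHMM (μ : Measure Ω) (H : ℕ → Ω → S_H) (O : ℕ → Ω → S_O) : Prop :=
  ∀ n (f : S_O → ℝ) (g : S_H → ℝ),
    μ[(fun ω => f (O (n + 1) ω) * g (H (n + 1) ω)) | sigHO H O n] =ᵐ[μ]
      fun ω => (μ[(fun ω' => f (O (n + 1) ω')) | sigH H n]) ω *
        (μ[(fun ω' => g (H (n + 1) ω')) | sigH H n]) ω

def IsMarkovChain (μ : Measure Ω) (H : ℕ → Ω → S_H) : Prop :=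
  ∀ n (g : S_H → ℝ),
    μ[(fun ω => g (H (n + 1) ω)) | sigHs H n] =ᵐ[μ] μ[(fun ω => g (H (n + 1) ω)) | sigH H n]

def HasConsecutiveCondIndep (μ : Measure Ω) (H : ℕ → Ω → S_H) (O : ℕ → Ω → S_O) : Prop :=
  ∀ n (f : ℕ → S_O → ℝ),
    μ[(fun ω => ∏ m ∈ Finset.range (n + 1), f m (O m ω)) | sigHs H n] =ᵐ[μ]
      fun ω => ∏ m ∈ Finset.range (n + 1), (μ[(fun ω' => f m (O m ω')) | sigH H (m - 1)]) ω

noncomputable def transitionMean (μ : Measure Ω) (H : ℕ → Ω → S_H) (n : ℕ) (g : S_H → ℝ) :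
    S_H → ℝ :=
  fiberMean μ (H n) fun ω => g (H (n + 1) ω)

/-- `E[f(Oₘ) | Hₘ₋₁ = ·]`; at `m = 0` the truncated subtraction conditions on `H₀`, which is the
convention `σ(H₋₁) := σ(H₀)`. -/
noncomputable def emissionMean (μ : Measure Ω) (H : ℕ → Ω → S_H) (O : ℕ → Ω → S_O) (m : ℕ)
    (f : S_O → ℝ) : S_H → ℝ :=
  fiberMean μ (H (m - 1)) fun ω => f (O m ω)

end Conditions

section MarkovChain

variable {Ω S_H : Type*} [Finite S_H] {mΩ : MeasurableSpace Ω} {μ : Measure Ω}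
  [IsFiniteMeasure μ] {H : ℕ → Ω → S_H} (hH : ∀ n, @Measurable Ω S_H _ ⊤ (H n))
include hH

lemma IsMarkovChain.setIntegral_pathEvent (hmarkov : IsMarkovChain μ H) (n : ℕ) (g : S_H → ℝ)
    (y : ℕ → S_H) :
    ∫ ω in pathEvent H n y, g (H (n + 1) ω) ∂μ =
      μ.real (pathEvent H n y) * transitionMean μ H n g (y n) :=
  (condExp_sigHs_ae_eq_iff hH (integrable_comp_of_finite (hH _) g)
    (φ := fun y => transitionMean μ H n g (y n))
    fun _ _ h => by rw [h n (Finset.self_mem_range_succ n)]).mp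
    ((hmarkov n g).trans
      (condExp_comap_ae_eq_fiberMean (hH n) (integrable_comp_of_finite (hH _) g))) y

lemma IsMarkovChain.measureReal_pathEvent_succ (hmarkov : IsMarkovChain μ H) (n : ℕ)
    (y : ℕ → S_H) :
    μ.real (pathEvent H (n + 1) y) =
      μ.real (pathEvent H n y) *
        transitionMean μ H n (({y (n + 1)} : Set S_H).indicator 1) (y n) := by
  have h := setIntegral_inter_preimage_singleton (μ := μ) (t := y (n + 1))
    (hH (n + 1) trivial) (pathEvent H n y) 1
  simp only [Pi.one_apply, one_mul, setIntegral_const, smul_eq_mul, mul_one] at h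
  rw [pathEvent_succ, ← hmarkov.setIntegral_pathEvent hH, ← h]

end MarkovChain

section HiddenMarkov

variable {Ω S_H S_O : Type*} {mΩ : MeasurableSpace Ω} {μ : Measure Ω} [IsFiniteMeasure μ]
  {H : ℕ → Ω → S_H} {O : ℕ → Ω → S_O}
  (hH : ∀ n, @Measurable Ω S_H _ ⊤ (H n)) (hO : ∀ n, @Measurable Ω S_O _ ⊤ (O n))
include hH hO

lemma IsBackwardHMM.isMarkovChain (hback : IsBackwardHMM μ H O) : IsMarkovChain μ H := by
  intro n g
  have h := hback n 1 g
  have h1 : μ[fun _ => (1 : ℝ) | sigH H n] = fun _ => 1 := condExp_const (hH n).comap_le 1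
  simp only [Pi.one_apply, one_mul, h1] at h
  exact condExp_ae_eq_of_le_of_condExp_ae_eq (sigH_le_sigHs H n) (sigHs_le_sigHO H O n)
    (sigHO_le hH hO n) h

variable [Finite S_H] [Finite S_O]

lemma condExp_sigH_mul_ae_eq (n : ℕ) (f : S_O → ℝ) (g : S_H → ℝ) :
    (fun ω => (μ[(fun ω' => f (O (n + 1) ω')) | sigH H n]) ω *
        (μ[(fun ω' => g (H (n + 1) ω')) | sigH H n]) ω) =ᵐ[μ]
      fun ω => emissionMean μ H O (n + 1) f (H n ω) * transitionMean μ H n g (H n ω) :=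
  (condExp_comap_ae_eq_fiberMean (hH n) (integrable_comp_of_finite (hO _) f)).mul
    (condExp_comap_ae_eq_fiberMean (hH n) (integrable_comp_of_finite (hH _) g))

lemma prod_condExp_sigH_ae_eq (s : Finset ℕ) (f : ℕ → S_O → ℝ) :
    (fun ω => ∏ m ∈ s, (μ[(fun ω' => f m (O m ω')) | sigH H (m - 1)]) ω) =ᵐ[μ]
      fun ω => ∏ m ∈ s, emissionMean μ H O m (f m) (H (m - 1) ω) :=
  ((Filter.eventually_all_finset s).mpr fun m _ =>
    condExp_comap_ae_eq_fiberMean (hH (m - 1)) (integrable_comp_of_finite (hO m) (f m))).mono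
    fun _ hω => Finset.prod_congr rfl hω

theorem isBackwardHMM_iff :
    IsBackwardHMM μ H O ↔ ∀ n (f : S_O → ℝ) (g : S_H → ℝ) (y : ℕ → S_H) (o : ℕ → S_O),
      ∫ ω in pathEvent H n y ∩ pathEvent O n o, f (O (n + 1) ω) * g (H (n + 1) ω) ∂μ =
        μ.real (pathEvent H n y ∩ pathEvent O n o) *
          (emissionMean μ H O (n + 1) f (y n) * transitionMean μ H n g (y n)) := by
  refine forall_congr' fun n => forall_congr' fun f => forall_congr' fun g => ?_
  rw [(condExp_sigH_mul_ae_eq hH hO n f g).congr_right, sigHO_eq_sigHs_prodMk]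
  refine (condExp_sigHs_ae_eq_iff (fun m => measurable_prodMk_top (hH m) (hO m))
    (integrable_comp_of_finite (measurable_prodMk_top (hO _) (hH _)) fun p => f p.1 * g p.2)
    (φ := fun p => emissionMean μ H O (n + 1) f (p n).1 * transitionMean μ H n g (p n).1)
    fun p p' h => by rw [h n (Finset.self_mem_range_succ n)]).trans ?_
  simp only [pathEvent_prodMk]
  exact ⟨fun h y o => h fun m => (y m, o m), fun h p => h _ _⟩

theorem hasConsecutiveCondIndep_iff :
    HasConsecutiveCondIndep μ H O ↔ ∀ n (f : ℕ → S_O → ℝ) (y : ℕ → S_H),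
      ∫ ω in pathEvent H n y, ∏ m ∈ Finset.range (n + 1), f m (O m ω) ∂μ =
        μ.real (pathEvent H n y) *
          ∏ m ∈ Finset.range (n + 1), emissionMean μ H O m (f m) (y (m - 1)) := by
  refine forall_congr' fun n => forall_congr' fun f => ?_
  rw [(prod_condExp_sigH_ae_eq hH hO _ f).congr_right]
  exact condExp_sigHs_ae_eq_iff hH ((memLp_top_prod_comp hO _ f).integrable le_top)
    (φ := fun y => ∏ m ∈ Finset.range (n + 1), emissionMean μ H O m (f m) (y (m - 1)))
    fun _ _ h => Finset.prod_congr rfl fun m hm => by rw [h (m - 1) (by simp at hm ⊢; omega)]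

lemma IsBackwardHMM.setIntegral_pathEvent_succ (hback : IsBackwardHMM μ H O) (n : ℕ)
    (f : ℕ → S_O → ℝ) (y : ℕ → S_H) :
    ∫ ω in pathEvent H (n + 1) y, ∏ m ∈ Finset.range (n + 2), f m (O m ω) ∂μ =
      (∫ ω in pathEvent H n y, ∏ m ∈ Finset.range (n + 1), f m (O m ω) ∂μ) *
        (emissionMean μ H O (n + 1) (f (n + 1)) (y n) *
          transitionMean μ H n (({y (n + 1)} : Set S_H).indicator 1) (y n)) := by
  set b := y (n + 1)
  have hle := sigHO_le hH hO n
  have hE : MeasurableSet[sigHO H O n] (pathEvent H n y) :=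
    sigHs_le_sigHO H O n _ (measurableSet_pathEvent H n y)
  have hprod : StronglyMeasurable[sigHO H O n]
      fun ω => ∏ m ∈ Finset.range (n + 1), f m (O m ω) := by
    rw [sigHO_eq_sigHs_prodMk]
    exact (Finset.measurable_prod _ fun m hm =>
      measurable_comp_sigHs (fun m ω => (H m ω, O m ω)) hm fun p => f m p.2).stronglyMeasurable
  calc ∫ ω in pathEvent H (n + 1) y, ∏ m ∈ Finset.range (n + 2), f m (O m ω) ∂μ
      = ∫ ω in pathEvent H n y, (∏ m ∈ Finset.range (n + 1), f m (O m ω)) *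
          (f (n + 1) (O (n + 1) ω) * ({b} : Set S_H).indicator 1 (H (n + 1) ω)) ∂μ := by
        rw [pathEvent_succ, setIntegral_inter_preimage_singleton (hH (n + 1) trivial)]
        congr with ω
        rw [Finset.prod_range_succ _ (n + 1), mul_assoc]
    _ = ∫ ω in pathEvent H n y, (∏ m ∈ Finset.range (n + 1), f m (O m ω)) *
          μ[fun ω => f (n + 1) (O (n + 1) ω) * ({b} : Set S_H).indicator 1 (H (n + 1) ω) |
            sigHO H O n] ω ∂μ :=
        setIntegral_mul_condExp hle hE hprod
          (((memLp_top_comp_of_finite (measurable_prodMk_top (hO _) (hH _))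
            fun p => f (n + 1) p.1 * ({b} : Set S_H).indicator 1 p.2).mul'
              (memLp_top_prod_comp hO _ f)).integrable le_top)
          (integrable_comp_of_finite (measurable_prodMk_top (hO _) (hH _))
            fun p => f (n + 1) p.1 * ({b} : Set S_H).indicator 1 p.2)
    _ = ∫ ω in pathEvent H n y, (∏ m ∈ Finset.range (n + 1), f m (O m ω)) *
          (emissionMean μ H O (n + 1) (f (n + 1)) (H n ω) *
            transitionMean μ H n (({b} : Set S_H).indicator 1) (H n ω)) ∂μ :=
        setIntegral_congr_ae (hle _ hE) (((hback n _ _).trans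
          (condExp_sigH_mul_ae_eq hH hO n _ _)).mono fun ω hω _ => by rw [hω])
    _ = _ := setIntegral_pathEvent_mul_comp hH
        (φ := fun x => emissionMean μ H O (n + 1) (f (n + 1)) (x n) *
          transitionMean μ H n (({b} : Set S_H).indicator 1) (x n))
        (fun _ _ h => by rw [h n (Finset.self_mem_range_succ n)]) _ y

theorem IsBackwardHMM.hasConsecutiveCondIndep (hback : IsBackwardHMM μ H O) :
    HasConsecutiveCondIndep μ H O := by
  have hmarkov := hback.isMarkovChain hH hO
  refine (hasConsecutiveCondIndep_iff hH hO).mpr fun n => ?_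
  induction n with
  | zero =>
    intro f y
    simpa [pathEvent_zero, emissionMean] using setIntegral_fiber_eq_mul_fiberMean (μ := μ) (H 0)
      (fun ω => f 0 (O 0 ω)) (y 0)
  | succ n ih =>
    intro f y
    rw [hback.setIntegral_pathEvent_succ hH hO, ih, hmarkov.measureReal_pathEvent_succ hH,
      Finset.prod_range_succ _ (n + 1), Nat.add_sub_cancel]
    ring

lemma HasConsecutiveCondIndep.measureReal_inter_pathEvent (hci : HasConsecutiveCondIndep μ H O)
    (n : ℕ) (y : ℕ → S_H) (o : ℕ → S_O) :
    μ.real (pathEvent H n y ∩ pathEvent O n o) = μ.real (pathEvent H n y) *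
      ∏ m ∈ Finset.range (n + 1),
        emissionMean μ H O m (({o m} : Set S_O).indicator 1) (y (m - 1)) := by
  have h := (hasConsecutiveCondIndep_iff hH hO).mp hci n (fun m => ({o m} : Set S_O).indicator 1) y
  simp only [prod_indicator_one_eq_indicator_pathEvent] at h
  rw [← h, integral_indicator_one (sigHs_le hO n _ (measurableSet_pathEvent O n o)),
    measureReal_restrict_apply (sigHs_le hO n _ (measurableSet_pathEvent O n o)), Set.inter_comm]

theorem IsMarkovChain.isBackwardHMM (hmarkov : IsMarkovChain μ H)
    (hci : HasConsecutiveCondIndep μ H O) : IsBackwardHMM μ H O := by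
  refine (isBackwardHMM_iff hH hO).mpr fun n f g y o => ?_
  set f' := Function.update (fun m => ({o m} : Set S_O).indicator (1 : S_O → ℝ)) (n + 1) f
  have hle := sigHs_le hH (n + 1)
  have hE : MeasurableSet[sigHs H (n + 1)] (pathEvent H n y) :=
    sigHs_mono H n.le_succ _ (measurableSet_pathEvent H n y)
  have hF : MeasurableSet (pathEvent O n o) := sigHs_le hO n _ (measurableSet_pathEvent O n o)
  calc ∫ ω in pathEvent H n y ∩ pathEvent O n o, f (O (n + 1) ω) * g (H (n + 1) ω) ∂μ
      = ∫ ω in pathEvent H n y, g (H (n + 1) ω) * ∏ m ∈ Finset.range (n + 2), f' m (O m ω) ∂μ := by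
        rw [← setIntegral_indicator hF]
        congr with ω
        rw [prod_update_indicator_eq_indicator_pathEvent]
        by_cases h : ω ∈ pathEvent O n o <;> simp [h, mul_comm]
    _ = ∫ ω in pathEvent H n y, g (H (n + 1) ω) *
          μ[fun ω => ∏ m ∈ Finset.range (n + 2), f' m (O m ω) | sigHs H (n + 1)] ω ∂μ :=
        setIntegral_mul_condExp hle hE
          (measurable_comp_sigHs H (Finset.self_mem_range_succ _) g).stronglyMeasurable
          (((memLp_top_prod_comp hO _ f').mul' (memLp_top_comp_of_finite (hH _) g)).integrable
            le_top)
          ((memLp_top_prod_comp hO _ f').integrable le_top)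
    _ = ∫ ω in pathEvent H n y, g (H (n + 1) ω) *
          ∏ m ∈ Finset.range (n + 2), emissionMean μ H O m (f' m) (H (m - 1) ω) ∂μ :=
        setIntegral_congr_ae (hle _ hE) (((hci (n + 1) f').trans
          (prod_condExp_sigH_ae_eq hH hO _ f')).mono fun ω hω _ => by rw [hω])
    _ = (∫ ω in pathEvent H n y, g (H (n + 1) ω) ∂μ) *
          ∏ m ∈ Finset.range (n + 2), emissionMean μ H O m (f' m) (y (m - 1)) :=
        setIntegral_pathEvent_mul_comp hH
          (φ := fun x => ∏ m ∈ Finset.range (n + 2), emissionMean μ H O m (f' m) (x (m - 1)))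
          (fun _ _ h => Finset.prod_congr rfl fun m hm => by
            rw [h (m - 1) (by simp at hm ⊢; omega)]) _ y
    _ = _ := by
        simp only [f']
        rw [hmarkov.setIntegral_pathEvent hH,
          prod_range_succ_update (fun m (h : S_O → ℝ) => emissionMean μ H O m h (y (m - 1))),
          hci.measureReal_inter_pathEvent hH hO, Nat.add_sub_cancel]
        ring

end HiddenMarkov

theorem stmt18_general {S_H S_O : Type*} [Fintype S_H] [Fintype S_O]
    {Ω : Type*} [MeasurableSpace Ω] (μ : Measure Ω) [IsProbabilityMeasure μ]
    (H : ℕ → Ω → S_H) (O : ℕ → Ω → S_O)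
    (hH : ∀ n, @Measurable Ω S_H _ ⊤ (H n))
    (hO : ∀ n, @Measurable Ω S_O _ ⊤ (O n)) :
    (∀ n : ℕ, ∀ f : S_O → ℝ, ∀ g : S_H → ℝ,
        μ[(fun ω => f (O (n + 1) ω) * g (H (n + 1) ω)) | sigHO H O n] =ᵐ[μ]
          fun ω =>
            (μ[(fun ω' => f (O (n + 1) ω')) | sigH H n]) ω *
              (μ[(fun ω' => g (H (n + 1) ω')) | sigH H n]) ω) ↔
      ((∀ n : ℕ, ∀ g : S_H → ℝ,
          μ[(fun ω => g (H (n + 1) ω)) | sigHs H n] =ᵐ[μ]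
            μ[(fun ω => g (H (n + 1) ω)) | sigH H n]) ∧
        (∀ n : ℕ, ∀ f : ℕ → S_O → ℝ,
          μ[(fun ω => ∏ m ∈ Finset.range (n + 1), f m (O m ω)) | sigHs H n] =ᵐ[μ]
            fun ω => ∏ m ∈ Finset.range (n + 1),
              (μ[(fun ω' => f m (O m ω')) | sigH H (m - 1)]) ω)) :=
  ⟨fun hback => ⟨IsBackwardHMM.isMarkovChain hH hO hback,
      IsBackwardHMM.hasConsecutiveCondIndep hH hO hback⟩,
    fun h => IsMarkovChain.isBackwardHMM hH hO h.1 h.2⟩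

/-- Equivalence between the backward hidden Markov condition (A) and the
conjunction (B) of Markovianity of the hidden process together with the time-consecutive
conditional independence condition (with the convention `σ(H_{−1}) := σ(H₀)`, implemented by
truncated subtraction `m - 1`). -/
theorem stmt18 {S_H S_O : Type*} [Fintype S_H] [Fintype S_O]
    [Nonempty S_H] [Nonempty S_O]
    {Ω : Type*} [MeasurableSpace Ω] (μ : Measure Ω) [IsProbabilityMeasure μ]
    (H : ℕ → Ω → S_H) (O : ℕ → Ω → S_O)
    (hH : ∀ n, @Measurable Ω S_H _ ⊤ (H n))
    (hO : ∀ n, @Measurable Ω S_O _ ⊤ (O n)) :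
    (∀ n : ℕ, ∀ f : S_O → ℝ, ∀ g : S_H → ℝ,
        μ[(fun ω => f (O (n + 1) ω) * g (H (n + 1) ω)) | sigHO H O n] =ᵐ[μ]
          fun ω =>
            (μ[(fun ω' => f (O (n + 1) ω')) | sigH H n]) ω *
              (μ[(fun ω' => g (H (n + 1) ω')) | sigH H n]) ω) ↔
      ((∀ n : ℕ, ∀ g : S_H → ℝ,
          μ[(fun ω => g (H (n + 1) ω)) | sigHs H n] =ᵐ[μ]
            μ[(fun ω => g (H (n + 1) ω)) | sigH H n]) ∧
        (∀ n : ℕ, ∀ f : ℕ → S_O → ℝ,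
          μ[(fun ω => ∏ m ∈ Finset.range (n + 1), f m (O m ω)) | sigHs H n] =ᵐ[μ]
            fun ω => ∏ m ∈ Finset.range (n + 1),
              (μ[(fun ω' => f m (O m ω')) | sigH H (m - 1)]) ω)) :=
  stmt18_general μ H O hH hO
end

section
/- Fix d ≥ 1. Let (P_{r;m,i})_{r,m,i ∈ {1,…,d}} be real numbers with P_{r;m,i} ≥ 0 and Σ_{m,i} P_{r;m,i} = 1 for every r (a (d×d²)-stochastic matrix), set P_{r;m} := Σ_i P_{r;m,i}, and let p₀ be a probability vector on {1,…,d}. Define the initial distribution on pairs p⁰(j,i) := Σ_r p₀(r)·P_{r;i,j} and the pair transition matrix q : ({1,…,d}²)×({1,…,d}²) → ℝ by q((j,i),(j',i')) := P_{j;i',j'}. Then: (a) q is a stochastic matrix on {1,…,d}² and p⁰ is a probability distribution on {1,…,d}²; (b) for every n ∈ ℕ and all i₀,…,iₙ ∈ {1,…,d}: Σ_{z₀,…,zₙ} p⁰(z₀,i₀)·∏_{m=1}^{n} q((z_{m−1},i_{m−1}),(z_m,i_m)) = Σ_{r₀,…,rₙ} p₀(r₀)·P_{r₀;i₀,r₁}·P_{r₁;i₁,r₂}···P_{r_{n−1};i_{n−1},rₙ}·P_{rₙ;iₙ}.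 That is, the classical process obtained from a D_e-preserving quantum Markov chain is stochastically equivalent to the Y-marginal of the classical Markov chain (Z,Y) on {1,…,d}² determined by (p⁰, q). -/
open BigOperators

/-- Given a `(d × d²)`-stochastic matrix `(P_{r;m,i})` and a probability
vector `p₀`, the pair transition matrix `q((j,i),(j',i')) := P_{j;i',j'}` and the initial
distribution `p⁰(j,i) := Σ_r p₀(r)·P_{r;i,j}` define a classical Markov chain `(Z,Y)` on
pairs whose `Y`-marginal joint probabilities coincide with
`Σ_{r₀,…,rₙ} p₀(r₀)·P_{r₀;i₀,r₁}···P_{r_{n−1};i_{n−1},rₙ}·P_{rₙ;iₙ}`. -/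
theorem stmt19 {d : ℕ} (hd : 1 ≤ d)
    (P : Fin d → Fin d → Fin d → ℝ)
    (hP_nonneg : ∀ r m i, 0 ≤ P r m i)
    (hP_row : ∀ r, (∑ m, ∑ i, P r m i) = 1)
    (p0 : Fin d → ℝ) (hp0_nonneg : ∀ r, 0 ≤ p0 r) (hp0_sum : ∑ r, p0 r = 1)
    (pInit : Fin d × Fin d → ℝ)
    (hpInit : ∀ j i, pInit (j, i) = ∑ r, p0 r * P r i j)
    (q : (Fin d × Fin d) → (Fin d × Fin d) → ℝ)
    (hq : ∀ j i j' i', q (j, i) (j', i') = P j i' j') :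
    (∀ x y : Fin d × Fin d, 0 ≤ q x y) ∧
    (∀ x : Fin d × Fin d, ∑ y : Fin d × Fin d, q x y = 1) ∧
    (∀ x : Fin d × Fin d, 0 ≤ pInit x) ∧
    (∑ x : Fin d × Fin d, pInit x = 1) ∧
    (∀ (n : ℕ) (i : ℕ → Fin d),
      (∑ z : Fin (n + 1) → Fin d,
          pInit (z 0, i 0) *
            ∏ m : Fin n, q (z m.castSucc, i m) (z m.succ, i (m + 1))) =
        ∑ r : Fin (n + 1) → Fin d,
          p0 (r 0) * (∏ m : Fin n, P (r m.castSucc) (i m) (r m.succ)) *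
            (∑ l, P (r (Fin.last n)) (i n) l)) := by
  refine ⟨?_, ?_, ?_, ?_, ?_⟩
  · rintro ⟨j, i⟩ ⟨j', i'⟩
    rw [hq]; exact hP_nonneg _ _ _
  · rintro ⟨j, i⟩
    rw [Fintype.sum_prod_type]
    calc (∑ j', ∑ i', q (j, i) (j', i')) = ∑ j', ∑ i', P j i' j' := by simp [hq]
      _ = ∑ i', ∑ j', P j i' j' := Finset.sum_comm
      _ = 1 := hP_row j
  · rintro ⟨j, i⟩
    rw [hpInit]
    exact Finset.sum_nonneg fun r _ => mul_nonneg (hp0_nonneg r) (hP_nonneg _ _ _)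
  · rw [Fintype.sum_prod_type]
    calc (∑ j, ∑ i, pInit (j, i)) = ∑ j, ∑ i', ∑ r, p0 r * P r i' j := by simp [hpInit]
      _ = ∑ i', ∑ j, ∑ r, p0 r * P r i' j := Finset.sum_comm
      _ = ∑ i', ∑ r, ∑ j, p0 r * P r i' j :=
          Finset.sum_congr rfl fun _ _ => Finset.sum_comm
      _ = ∑ r, ∑ i', ∑ j, p0 r * P r i' j := Finset.sum_comm
      _ = ∑ r, p0 r * (∑ i', ∑ j, P r i' j) := by
          simp [Finset.mul_sum]
      _ = 1 := by simp [hP_row, hp0_sum]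
  · intro n i
    -- both sides equal the "symmetric" sum over paths of length n+2
    have key : ∀ (lhs rhs : ℝ),
        lhs = (∑ w : Fin (n + 2) → Fin d,
          p0 (w 0) * ∏ m : Fin (n + 1), P (w m.castSucc) (i m) (w m.succ)) →
        rhs = (∑ w : Fin (n + 2) → Fin d,
          p0 (w 0) * ∏ m : Fin (n + 1), P (w m.castSucc) (i m) (w m.succ)) →
        lhs = rhs := fun _ _ h1 h2 => h1.trans h2.symm
    refine key _ _ ?_ ?_
    · -- LHS: split off the first coordinate via Fin.cons
      rw [← (Fin.consEquiv (fun _ : Fin (n + 2) => Fin d)).sum_comp]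
      rw [Fintype.sum_prod_type]
      rw [Finset.sum_comm]
      refine Finset.sum_congr rfl fun z _ => ?_
      rw [hpInit, Finset.sum_mul]
      refine Finset.sum_congr rfl fun a _ => ?_
      simp only [Fin.consEquiv_apply, hq]
      rw [Fin.prod_univ_succ]
      simp only [Fin.castSucc_zero, Fin.cons_zero, ← Fin.succ_castSucc, Fin.cons_succ,
        Fin.val_succ, Fin.val_zero, mul_assoc]
  
    · -- RHS: split off the last coordinate via Fin.snoc
      rw [← (Fin.snocEquiv (fun _ : Fin (n + 2) => Fin d)).sum_comp]
      rw [Fintype.sum_prod_type]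
      rw [Finset.sum_comm]
      refine Finset.sum_congr rfl fun z _ => ?_
      rw [Finset.mul_sum]
      refine Finset.sum_congr rfl fun a _ => ?_
      simp only [Fin.snocEquiv_apply]
      rw [Fin.prod_univ_castSucc]
      have h0 : (0 : Fin (n + 2)) = Fin.castSucc 0 := rfl
      rw [h0]
      simp only [Fin.snoc_castSucc, Fin.succ_last, Fin.snoc_last, Fin.succ_castSucc,
        Fin.val_last, Fin.coe_castSucc]
      ring
end
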